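/- arXiv:q-alg/9503001 — 3 statements merged into one kernel-verified Lean document; each statement's English description precedes it below -/
import Mathlib

section
/- For a partition μ of length at most n+1 and the row tableau t_μ = a_1^{μ_1} a_2^{μ_2} ⋯ a_{n+1}^{μ_{n+1}}, the arithmetic mean b'(t_μ) of the numbers d'(t') = Σ_{i=1}^n (n−i+1) d_i(t') over the S_{n+1}-orbit of t_μ equals ‖μ‖ = Σ_i (i−1) μ_i. -/
/-!
Common definitions: words over the alphabet {0,…,n} (letter `a_i` of the paper
is encoded as `i - 1`), crystal operators `ε_i, φ_i, σ_i` (colour `c = i - 1`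
acts on the letters `c, c+1`), plactic congruence, tableau reading words,
cyclage, charge, orbits under the Weyl group action, and the various
Kostka-type polynomials.
-/

namespace PlacticCrystal

/-- A word over the alphabet `{0, 1, …}`. -/
abbrev Word := List ℕ

/-- For colour `i` (acting on letters `i` and `i+1`), repeatedly bracket factors
`(i+1) i`.  Returns the pair consisting of the positions of the unbracketed
letters `i` (in left-to-right order) and the positions of the unbracketed
letters `i+1` (rightmost first). -/
def bracketState (i : ℕ) (w : Word) : List ℕ × List ℕ :=
  (w.zipIdx.map Prod.swap).foldl
    (fun (st : List ℕ × List ℕ) (p : ℕ × ℕ) =>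
      if p.2 = i + 1 then (st.1, p.1 :: st.2)
      else if p.2 = i then
        match st.2 with
        | [] => (st.1 ++ [p.1], [])
        | _ :: rest => (st.1, rest)
      else st)
    (([], []) : List ℕ × List ℕ)

/-- The crystal raising operator `ε_i` (paper's `ε_{i+1}` in 1-based indexing):
changes the leftmost unbracketed letter `i+1` into `i`; `none` encodes `0`. -/
def eps (i : ℕ) (w : Word) : Option Word :=
  match (bracketState i w).2.getLast? with
  | none => none
  | some p => some (w.set p i)

/-- The crystal lowering operator `φ_i`: changes the rightmost unbracketed
letter `i` into `i+1`; `none` encodes `0`. -/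
def phi (i : ℕ) (w : Word) : Option Word :=
  match (bracketState i w).1.getLast? with
  | none => none
  | some p => some (w.set p (i + 1))

/-- The reflection `σ_i`: changes the unbracketed subword `i^r (i+1)^s`
into `i^s (i+1)^r`. -/
def sigma (i : ℕ) (w : Word) : Word :=
  let closes := (bracketState i w).1
  let stack := (bracketState i w).2
  if stack.length ≤ closes.length then
    (closes.drop stack.length).foldl (fun v p => v.set p (i + 1)) w
  else
    (stack.reverse.take (stack.length - closes.length)).foldl (fun v p => v.set p i) w

/-- Iteration of a partially defined operator on words. -/
def iterOpt (f : Word → Option Word) : ℕ → Word → Option Word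
  | 0, w => some w
  | k + 1, w => (f w).bind (iterOpt f k)

/-- `max {k | ε_i^k(w) ≠ 0}`. -/
noncomputable def epsMax (i : ℕ) (w : Word) : ℕ :=
  sSup {k | (iterOpt (eps i) k w).isSome}

/-- `max {k | φ_i^k(w) ≠ 0}`. -/
noncomputable def phiMax (i : ℕ) (w : Word) : ℕ :=
  sSup {k | (iterOpt (phi i) k w).isSome}

/-- The exponent of `w` in direction `i` (0-based colour):
`d_{i+1}(w)` in the paper's notation. -/
noncomputable def dExp (i : ℕ) (w : Word) : ℕ := min (epsMax i w) (phiMax i w)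

/-- `d(w) = Σ_{i=1}^n i · d_i(w)`. -/
noncomputable def dStat (n : ℕ) (w : Word) : ℕ :=
  ∑ c ∈ Finset.range n, (c + 1) * dExp c w

/-- `d'(w) = Σ_{i=1}^n (n - i + 1) · d_i(w)`. -/
noncomputable def dPrime (n : ℕ) (w : Word) : ℕ :=
  ∑ c ∈ Finset.range n, (n - c) * dExp c w

/-- `w` is reachable from `t` by applying reflections `σ_i`, `1 ≤ i ≤ n`
(0-based colours `c < n`): this describes the orbit of `t` under the
Weyl group `S_{n+1}` acting via the `σ_i`. -/
def Reachable (n : ℕ) (t w : Word) : Prop :=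
  ∃ l : List ℕ, (∀ c ∈ l, c < n) ∧ w = l.foldl (fun v c => sigma c v) t

/-- All words of length `L` over the alphabet `{0, …, n}`. -/
noncomputable def wordsOf (n L : ℕ) : Finset Word :=
  (Finset.univ : Finset (Fin L → Fin (n + 1))).image fun f => (List.ofFn f).map Fin.val

open Classical in
/-- The orbit of `t` under the action of `S_{n+1}` generated by the `σ_i`. -/
noncomputable def orbit (n : ℕ) (t : Word) : Finset Word :=
  (wordsOf n t.length).filter (Reachable n t)

/-- `b(t)`: the arithmetic mean of `d` over the orbit of `t`. -/
noncomputable def bStat (n : ℕ) (w : Word) : ℕ :=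
  (∑ v ∈ orbit n w, dStat n v) / (orbit n w).card

/-- The row reading word of a semistandard Young tableau: rows are read from
bottom to top, each row from left to right. -/
def readingWord (sh : YoungDiagram) (T : SemistandardYoungTableau sh) : Word :=
  (((List.range (sh.colLen 0)).reverse).map fun i =>
    (List.range (sh.rowLen i)).map fun j => T i j).flatten

/-- `w` is the reading word of a semistandard tableau of shape `sh` with
entries in `{0, …, n}` (i.e. letters `a_1, …, a_{n+1}`). -/
def IsTabShape (n : ℕ) (sh : YoungDiagram) (w : Word) : Prop :=
  ∃ T : SemistandardYoungTableau sh,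
    (∀ i j, (i, j) ∈ sh → T i j ≤ n) ∧ w = readingWord sh T

/-- `w` is the reading word of some semistandard tableau over `{0, …, n}`. -/
def IsTab (n : ℕ) (w : Word) : Prop := ∃ sh : YoungDiagram, IsTabShape n sh w

/-- `w` is the reading word of a semistandard tableau of shape `sh` and
weight `mu` (the letter `j`, i.e. `a_{j+1}`, occurs `mu_{j+1}` times). -/
def IsTabOf (n : ℕ) (sh : YoungDiagram) (mu : List ℕ) (w : Word) : Prop :=
  IsTabShape n sh w ∧ ∀ a, w.count a = mu.getD a 0

open Classical in
/-- The (reading words of the) tableaux of shape `sh` and weight `mu`: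
the set `Tab(λ, μ)`. -/
noncomputable def TabWords (n : ℕ) (sh : YoungDiagram) (mu : List ℕ) : Finset Word :=
  (wordsOf n sh.card).filter (IsTabOf n sh mu)

open Classical in
/-- The (reading words of the) tableaux of shape `sh` (any weight). -/
noncomputable def TabWordsShape (n : ℕ) (sh : YoungDiagram) : Finset Word :=
  (wordsOf n sh.card).filter (IsTabShape n sh)

/-- The plactic congruence, generated by the Knuth relations. -/
inductive Plactic : Word → Word → Prop
  | knuth1 {x y z : ℕ} : x < y → y < z → Plactic [z, x, y] [x, z, y]
  | knuth2 {x y z : ℕ} : x < y → y < z → Plactic [y, x, z] [y, z, x]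
  | knuth3 {x y : ℕ} : x < y → Plactic [y, x, x] [x, y, x]
  | knuth4 {x y : ℕ} : x < y → Plactic [y, x, y] [y, y, x]
  | refl (w : Word) : Plactic w w
  | symm {u v : Word} : Plactic u v → Plactic v u
  | trans {u v w : Word} : Plactic u v → Plactic v w → Plactic u w
  | append {u v u' v' : Word} : Plactic u u' → Plactic v v' →
      Plactic (u ++ v) (u' ++ v')

/-- `t'` is a cyclage of `t`: for some letter `a_i` with `i ≥ 2` (0-based:
`a ≥ 1`), `t ≡ a u` and `t' ≡ u a` in the plactic monoid. -/
def CyclageStep (t t' : Word) : Prop :=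
  ∃ (a : ℕ) (u : Word), 1 ≤ a ∧ Plactic t (a :: u) ∧ Plactic t' (u ++ [a])

/-- The row word `t_μ = a_1^{μ_1} a_2^{μ_2} ⋯`. -/
def rowWord (mu : List ℕ) : Word :=
  ((mu.zipIdx.map Prod.swap).map fun p => List.replicate p.2 p.1).flatten

/-- The cocharge of `t` (of weight the partition `mu`): the number of
cyclages needed to transform `t` into the row word `t_μ`. -/
noncomputable def cocharge (mu : List ℕ) (t : Word) : ℕ :=
  sInf {k | ∃ f : ℕ → Word, f 0 = t ∧ f k = rowWord mu ∧
    ∀ j < k, CyclageStep (f j) (f (j + 1))}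

/-- `‖μ‖ = Σ_i (i - 1) μ_i`. -/
def normMu (mu : List ℕ) : ℕ :=
  ∑ j ∈ Finset.range mu.length, j * mu.getD j 0

/-- The charge `c(t) = ‖μ‖ - co(t)` of a tableau word of partition weight `mu`. -/
noncomputable def charge (mu : List ℕ) (t : Word) : ℕ := normMu mu - cocharge mu t

/-- The weight of a word, as the list of multiplicities of the letters `0, …, n`. -/
def weightList (n : ℕ) (w : Word) : List ℕ :=
  (List.range (n + 1)).map fun j => w.count j

/-- The charge of a tableau word of arbitrary weight, extended by requiring
invariance under the reflections `σ_i`. -/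
noncomputable def chargeExt (n : ℕ) (t : Word) : ℕ :=
  sInf {c | ∃ w, Reachable n t w ∧ (weightList n w).Pairwise (· ≥ ·) ∧
    c = charge (weightList n w) w}

/-- The involution `Ω₂` : the anti-automorphism of the free monoid with
`Ω₂(a_i) = a_{n+2-i}` (0-based: `j ↦ n - j`). -/
def omega2 (n : ℕ) (w : Word) : Word := (w.map fun a => n - a).reverse

/-- The multivariate Kostka polynomial
`K_{λ,(k^{n+1})}(x_1,…,x_n) = Σ_{t ∈ Tab(λ,(k^{n+1}))} Π_i x_i^{d_i(t)}`. -/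
noncomputable def mvKostka (n k : ℕ) (sh : YoungDiagram) : MvPolynomial (Fin n) ℤ :=
  ∑ w ∈ TabWords n sh (List.replicate (n + 1) k),
    ∏ c : Fin n, MvPolynomial.X c ^ dExp (c : ℕ) w

/-- The Schur polynomial `s_λ(x_1,…,x_n)`: the generating polynomial of
semistandard tableaux of shape `λ` with entries in `{1, …, n}`. -/
noncomputable def schur (n : ℕ) (sh : YoungDiagram) : MvPolynomial (Fin n) ℤ :=
  ∑ w ∈ TabWordsShape (n - 1) sh, ∏ c : Fin n, MvPolynomial.X c ^ w.count (c : ℕ)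

/-- A Yamanouchi tableau word: a tableau word whose weight equals its shape. -/
def IsYamWord (n : ℕ) (y : Word) : Prop :=
  ∃ sh : YoungDiagram, IsTabShape n sh y ∧ ∀ j, y.count j = sh.rowLen j

/-- The reading word of the Yamanouchi tableau of shape/weight `lam`
(row `i` is filled with the letter `a_{i+1}`, rows read bottom to top). -/
def yamWord (lam : List ℕ) : Word :=
  (((lam.zipIdx.map Prod.swap).map fun p => List.replicate p.2 p.1).reverse).flatten

/-- `u` is the tableau word of (componentwise) minimal weight such that the
plactic product `t ⋅ u` is a Yamanouchi tableau. -/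
def MinimalYamComplement (n : ℕ) (t u : Word) : Prop :=
  IsTab n u ∧ (∃ y, IsYamWord n y ∧ Plactic (t ++ u) y) ∧
    ∀ v, IsTab n v → (∃ y, IsYamWord n y ∧ Plactic (t ++ v) y) →
      ∀ j, u.count j ≤ v.count j

/-- The vector `ρ = (n, n-1, …, 0)` (the half-sum of positive roots, up to a
multiple of `(1,…,1)`, which does not affect Lusztig's formula). -/
def rho (n : ℕ) : Fin (n + 1) → ℤ := fun k => ((n - (k : ℕ) : ℕ) : ℤ)

/-- The positive root `e_i - e_j` attached to a pair `p = (i, j)` with `i < j`. -/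
def rootVec (n : ℕ) (p : Fin (n + 1) × Fin (n + 1)) : Fin (n + 1) → ℤ :=
  fun k => (if k = p.1 then 1 else 0) - (if k = p.2 then 1 else 0)

open Classical in
/-- The `q`-analogue `P_q` of Kostant's partition function for `A_n`, defined by
`Π_{α ∈ R⁺} (1 - q e^α)^{-1} = Σ_μ P_q(μ) e^μ`: the coefficient of `q^k` in
`P_q(v)` is the number of ways of writing `v` as a sum of `k` positive roots. -/
noncomputable def qKostant (n : ℕ) (v : Fin (n + 1) → ℤ) : Polynomial ℤ :=
  ∑ c : (Fin (n + 1) × Fin (n + 1)) → Fin ((∑ i : Fin (n + 1), (v i * ((n - (i : ℕ) : ℕ) : ℤ))).toNat + 1),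
    if (∀ p : Fin (n + 1) × Fin (n + 1), ¬ p.1 < p.2 → (c p : ℕ) = 0) ∧
       (∀ k, (∑ p : Fin (n + 1) × Fin (n + 1), (c p : ℤ) * rootVec n p k) = v k)
    then Polynomial.X ^ (∑ p : Fin (n + 1) × Fin (n + 1), (c p : ℕ)) else 0

/-- Lusztig's `q`-analogue of weight multiplicity
`K_{λμ}(q) = Σ_{w ∈ W} (-1)^{ℓ(w)} P_q(w(λ+ρ) - μ - ρ)` for `A_n`. -/
noncomputable def lusztigK (n : ℕ) (lam mu : List ℕ) : Polynomial ℤ :=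
  ∑ w : Equiv.Perm (Fin (n + 1)),
    ((Equiv.Perm.sign w : ℤˣ) : ℤ) •
      qKostant n (fun k =>
        ((lam.getD ((w⁻¹ k : Fin (n + 1)) : ℕ) 0 : ℤ) + rho n (w⁻¹ k))
          - (mu.getD ((k : Fin (n + 1)) : ℕ) 0 : ℤ) - rho n k)

/-- The partition `[α, β]^k_{n+1} = (α_1+k, …, α_r+k, k, …, k, k-β_s, …, k-β_1)`. -/
def lamOf (n k : ℕ) (alpha beta : List ℕ) : List ℕ :=
  alpha.map (· + k) ++ List.replicate (n + 1 - alpha.length - beta.length) k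
    ++ beta.reverse.map (k - ·)

/-- The descent set `D(I) = {i_1, i_1+i_2, …, i_1+⋯+i_{r-1}}` of a composition. -/
def descSet {m : ℕ} (I : Composition m) : Finset ℕ :=
  (Finset.Ico 1 I.length).image I.sizeUpTo

/-- `t_d = x_d (1 - x_d)^{-1}` as a formal power series (variables are
`x_1, …, x_n`, encoded by `Fin n`). -/
noncomputable def tv (n : ℕ) (d : ℕ) : MvPowerSeries (Fin n) ℚ :=
  if h : d - 1 < n then
    MvPowerSeries.X (⟨d - 1, h⟩ : Fin n) * (1 - MvPowerSeries.X (⟨d - 1, h⟩ : Fin n))⁻¹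
  else 0

open Classical in
/-- The monomial `x_{ν'(t)}` attached to a tableau word `t` of rectangular
weight: `ν(t)` is the weight of the minimal Yamanouchi complement of `t`,
and a part `m` of the conjugate `ν'(t)` occurs `ν_m - ν_{m+1}` times. -/
noncomputable def nuMon (n : ℕ) (w : Word) : MvPolynomial (Fin n) ℤ :=
  if h : ∃ u, MinimalYamComplement n w u then
    ∏ c : Fin n, MvPolynomial.X c ^
      (h.choose.count (c : ℕ) - h.choose.count ((c : ℕ) + 1))
  else 1

open Classical in
/-- The set `Tab(·, μ)` of tableau words of weight `mu` (any shape). -/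
noncomputable def TabWordsWeight (n : ℕ) (mu : List ℕ) : Finset Word :=
  (wordsOf n mu.sum).filter fun w => ∃ sh : YoungDiagram, IsTabOf n sh mu w


-- Stage 1: bracketState computation
private def bstep (i : ℕ) : List ℕ × List ℕ → ℕ × ℕ → List ℕ × List ℕ :=
  fun st p =>
    if p.2 = i + 1 then (st.1, p.1 :: st.2)
    else if p.2 = i then
      match st.2 with
      | [] => (st.1 ++ [p.1], [])
      | _ :: rest => (st.1, rest)
    else st

def List.enumFrom {α : Type*} (k : ℕ) (l : List α) : List (ℕ × α) :=
  (l.zipIdx k).map Prod.swap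

@[simp] lemma List.enumFrom_nil {α : Type*} (k : ℕ) : List.enumFrom k ([] : List α) = [] := rfl

lemma List.enumFrom_cons {α : Type*} (k : ℕ) (a : α) (l : List α) :
    List.enumFrom k (a :: l) = (k, a) :: List.enumFrom (k + 1) l := rfl

lemma List.enumFrom_append {α : Type*} (k : ℕ) (l₁ l₂ : List α) :
    List.enumFrom k (l₁ ++ l₂) = List.enumFrom k l₁ ++ List.enumFrom (k + l₁.length) l₂ := by
  simp [List.enumFrom, List.zipIdx_append]

lemma bracketState_eq (i : ℕ) (w : Word) :
    bracketState i w = (List.enumFrom 0 w).foldl (bstep i) ([], []) := rfl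

lemma foldl_bstep_avoid (i : ℕ) : ∀ (A : List ℕ) (k : ℕ) (st : List ℕ × List ℕ),
    (∀ x ∈ A, x ≠ i ∧ x ≠ i + 1) →
    (List.enumFrom k A).foldl (bstep i) st = st := by
  intro A
  induction A with
  | nil => intros; rfl
  | cons a A ih =>
    intro k st h
    have ha := h a List.mem_cons_self
    rw [List.enumFrom_cons, List.foldl_cons,
      show bstep i st (k, a) = st by simp [bstep, ha.1, ha.2],
      ih _ _ (fun x hx => h x (List.mem_cons_of_mem _ hx))]

lemma foldl_bstep_replicate_i (i : ℕ) : ∀ (r k : ℕ) (cl : List ℕ),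
    (List.enumFrom k (List.replicate r i)).foldl (bstep i) (cl, []) =
      (cl ++ List.range' k r, []) := by
  intro r
  induction r with
  | zero => simp
  | succ r ih =>
    intro k cl
    rw [List.replicate_succ, List.enumFrom_cons, List.foldl_cons,
      show bstep i (cl, []) (k, i) = (cl ++ [k], []) by simp [bstep],
      ih (k + 1) (cl ++ [k]), List.range'_succ]
    simp

lemma foldl_bstep_replicate_i1 (i : ℕ) : ∀ (s k : ℕ) (st : List ℕ × List ℕ),
    (List.enumFrom k (List.replicate s (i + 1))).foldl (bstep i) st =
      (st.1, (List.range' k s).reverse ++ st.2) := by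
  intro s
  induction s with
  | zero => simp
  | succ s ih =>
    intro k st
    rw [List.replicate_succ, List.enumFrom_cons, List.foldl_cons,
      show bstep i st (k, i + 1) = (st.1, k :: st.2) by simp [bstep],
      ih (k + 1), List.range'_succ]
    simp

lemma bracket_core (i r s : ℕ) (A B : Word)
    (hA : ∀ x ∈ A, x ≠ i ∧ x ≠ i + 1) (hB : ∀ x ∈ B, x ≠ i ∧ x ≠ i + 1) :
    bracketState i (A ++ (List.replicate r i ++ (List.replicate s (i + 1) ++ B)))
      = (List.range' A.length r, (List.range' (A.length + r) s).reverse) := by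
  rw [bracketState_eq, List.enumFrom_append, List.foldl_append,
    foldl_bstep_avoid i A 0 _ hA, List.enumFrom_append, List.foldl_append,
    foldl_bstep_replicate_i, List.enumFrom_append, List.foldl_append,
    foldl_bstep_replicate_i1, foldl_bstep_avoid i B _ _ hB]
  simp

-- Stage 2: crystal operators on sorted block words
/-- The canonical word `A ++ i^r (i+1)^s ++ B`. -/
def mid (i r s : ℕ) (A B : Word) : Word :=
  A ++ (List.replicate r i ++ (List.replicate s (i + 1) ++ B))

lemma set_after (A X : Word) (k x : ℕ) :
    (A ++ X).set (A.length + k) x = A ++ X.set k x := by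
  rw [List.set_append, if_neg (by omega)]
  congr 2
  omega

lemma mid_assoc (i r s : ℕ) (A B : Word) :
    mid i r s A B = (A ++ List.replicate r i) ++ (List.replicate s (i + 1) ++ B) := by
  simp [mid]

lemma length_mid (i r s : ℕ) (A B : Word) :
    (mid i r s A B).length = A.length + r + s + B.length := by
  simp [mid]; omega

lemma eps_mid_zero (i r : ℕ) (A B : Word)
    (hA : ∀ x ∈ A, x ≠ i ∧ x ≠ i + 1) (hB : ∀ x ∈ B, x ≠ i ∧ x ≠ i + 1) :
    eps i (mid i r 0 A B) = none := by
  rw [eps, mid, bracket_core i r 0 A B hA hB]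
  rfl

lemma eps_mid_succ (i r s : ℕ) (A B : Word)
    (hA : ∀ x ∈ A, x ≠ i ∧ x ≠ i + 1) (hB : ∀ x ∈ B, x ≠ i ∧ x ≠ i + 1) :
    eps i (mid i r (s + 1) A B) = some (mid i (r + 1) s A B) := by
  rw [eps, mid, bracket_core i r (s + 1) A B hA hB]
  simp only [List.getLast?_reverse, List.head?_range', Nat.succ_ne_zero, if_false]
  congr 1
  have h1 : A.length + r = (A ++ List.replicate r i).length + 0 := by simp
  rw [← mid, mid_assoc, h1, set_after]
  have h2 : List.replicate (s + 1) (i + 1) ++ B = (i + 1) :: (List.replicate s (i + 1) ++ B) := by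
    rw [List.replicate_succ]; rfl
  rw [h2, List.set_cons_zero, mid_assoc]
  simp [List.replicate_succ']

lemma phi_mid_zero (i s : ℕ) (A B : Word)
    (hA : ∀ x ∈ A, x ≠ i ∧ x ≠ i + 1) (hB : ∀ x ∈ B, x ≠ i ∧ x ≠ i + 1) :
    phi i (mid i 0 s A B) = none := by
  rw [phi, mid, bracket_core i 0 s A B hA hB]
  rfl

lemma phi_mid_succ (i r s : ℕ) (A B : Word)
    (hA : ∀ x ∈ A, x ≠ i ∧ x ≠ i + 1) (hB : ∀ x ∈ B, x ≠ i ∧ x ≠ i + 1) :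
    phi i (mid i (r + 1) s A B) = some (mid i r (s + 1) A B) := by
  rw [phi, mid, bracket_core i (r + 1) s A B hA hB]
  rw [List.range'_concat]
  simp only [List.getLast?_concat]
  congr 1
  have h0 : mid i (r + 1) s A B = (A ++ List.replicate r i) ++ ((i :: (List.replicate s (i + 1) ++ B))) := by
    simp [mid, List.replicate_succ']
  have h1 : A.length + 1 * r = (A ++ List.replicate r i).length + 0 := by simp
  rw [← mid, h0, h1, set_after, List.set_cons_zero, mid_assoc]
  rw [List.replicate_succ]
  rfl

lemma foldl_set_range' (y : ℕ) : ∀ (m k : ℕ) (w : Word), k + m ≤ w.length →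
    (List.range' k m).foldl (fun v p => v.set p y) w
      = w.take k ++ (List.replicate m y ++ w.drop (k + m)) := by
  intro m
  induction m with
  | zero => intro k w h; simp
  | succ m ih =>
    intro k w h
    rw [List.range'_succ, List.foldl_cons, ih _ _ (by simp; omega)]
    have hk : k < w.length := by omega
    have hset : w.set k y = w.take k ++ (y :: w.drop (k + 1)) := by
      rw [List.set_eq_take_append_cons_drop, if_pos hk]
    rw [hset]
    have hlen : (w.take k).length = k := by simp; omega
    have ht : (w.take k ++ (y :: w.drop (k + 1))).take (k + 1)
        = w.take k ++ [y] := by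
      rw [show k + 1 = (w.take k).length + 1 by omega, List.take_length_add_append]
      rfl
    have hd : (w.take k ++ (y :: w.drop (k + 1))).drop (k + 1 + m)
        = w.drop (k + (m + 1)) := by
      rw [show k + 1 + m = (w.take k).length + (1 + m) by omega, List.drop_length_add_append,
        show 1 + m = m + 1 by omega, List.drop_succ_cons, List.drop_drop]
      congr 1
      omega
    rw [ht, hd]
    simp [List.replicate_succ]

-- Stage 3: sigma on canonical words
lemma mid_def (i r s : ℕ) (A B : Word) :
    mid i r s A B = A ++ (List.replicate r i ++ (List.replicate s (i + 1) ++ B)) := rfl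

lemma sigma_mid (i r s : ℕ) (A B : Word)
    (hA : ∀ x ∈ A, x ≠ i ∧ x ≠ i + 1) (hB : ∀ x ∈ B, x ≠ i ∧ x ≠ i + 1) :
    sigma i (mid i r s A B) = mid i s r A B := by
  have hw := bracket_core i r s A B hA hB
  rw [← mid] at hw
  simp only [sigma, hw, List.length_reverse, List.length_range']
  by_cases hsr : s ≤ r
  · obtain ⟨d, rfl⟩ := Nat.exists_eq_add_of_le hsr
    rw [if_pos (by omega)]
    have hdrop : (List.range' A.length (s + d)).drop s = List.range' (A.length + s) d := by
      rw [show List.range' A.length (s + d)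
            = List.range' A.length s ++ List.range' (A.length + 1 * s) d by
          rw [List.range'_append],
        List.drop_left' (by simp)]
      congr 1
      omega
    rw [hdrop, foldl_set_range' _ _ _ _ (by rw [length_mid]; omega)]
    have htake : (mid i (s + d) s A B).take (A.length + s) = A ++ List.replicate s i := by
      rw [show mid i (s + d) s A B = (A ++ List.replicate s i)
            ++ (List.replicate d i ++ (List.replicate s (i + 1) ++ B)) by
          rw [mid_def, List.replicate_add]; simp only [List.append_assoc],
        List.take_left' (by simp)]
    have hdrop2 : (mid i (s + d) s A B).drop (A.length + s + d)
        = List.replicate s (i + 1) ++ B := by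
      rw [mid_assoc, List.drop_left' (by simp; omega)]
    rw [htake, hdrop2, mid_def, show s + d = d + s by omega, List.replicate_add]
    simp only [List.append_assoc]
  · have hlt : r < s := not_le.mp hsr
    obtain ⟨e, rfl⟩ := Nat.exists_eq_add_of_le (le_of_lt hlt)
    rw [if_neg hsr, List.reverse_reverse]
    have htakeR : (List.range' (A.length + r) (r + e)).take (r + e - r)
        = List.range' (A.length + r) e := by
      rw [show r + e - r = e by omega,
        show List.range' (A.length + r) (r + e)
            = List.range' (A.length + r) e ++ List.range' (A.length + r + 1 * e) r by
          rw [List.range'_append, Nat.add_comm e r],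
        List.take_left' (by simp)]
    rw [htakeR, foldl_set_range' _ _ _ _ (by rw [length_mid]; omega)]
    have htake : (mid i r (r + e) A B).take (A.length + r) = A ++ List.replicate r i := by
      rw [mid_assoc, List.take_left' (by simp)]
    have hdrop2 : (mid i r (r + e) A B).drop (A.length + r + e)
        = List.replicate r (i + 1) ++ B := by
      rw [show mid i r (r + e) A B = ((A ++ List.replicate r i) ++ List.replicate e (i + 1))
            ++ (List.replicate r (i + 1) ++ B) by
          rw [mid_def, show r + e = e + r by omega, List.replicate_add]; simp only [List.append_assoc],
        List.drop_left' (by simp; omega)]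
    rw [htake, hdrop2, mid_def, List.replicate_add]
    simp only [List.append_assoc]

-- Stage 4: block decomposition of rowWord
def Gw (k : ℕ) (l : List ℕ) : Word :=
  ((List.enumFrom k l).map fun p => List.replicate p.2 p.1).flatten

lemma rowWord_eq_Gw (l : List ℕ) : rowWord l = Gw 0 l := rfl

lemma Gw_nil (k : ℕ) : Gw k [] = [] := rfl

lemma Gw_cons (k a : ℕ) (l : List ℕ) :
    Gw k (a :: l) = List.replicate a k ++ Gw (k + 1) l := rfl

lemma Gw_append (k : ℕ) (l₁ l₂ : List ℕ) :
    Gw k (l₁ ++ l₂) = Gw k l₁ ++ Gw (k + l₁.length) l₂ := by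
  simp [Gw, List.enumFrom_append]

lemma mem_Gw : ∀ (l : List ℕ) (k x : ℕ), x ∈ Gw k l → k ≤ x ∧ x < k + l.length := by
  intro l
  induction l with
  | nil => intro k x hx; simp [Gw_nil] at hx
  | cons a l ih =>
    intro k x hx
    rw [Gw_cons, List.mem_append] at hx
    rcases hx with hx | hx
    · have := List.eq_of_mem_replicate hx
      subst this
      simp
    · have := ih (k + 1) x hx
      constructor <;> [omega; (simp; omega)]

lemma length_Gw : ∀ (l : List ℕ) (k : ℕ), (Gw k l).length = l.sum := by
  intro l
  induction l with
  | nil => intro k; rfl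
  | cons a l ih => intro k; simp [Gw_cons, ih]

lemma count_Gw : ∀ (l : List ℕ) (k j : ℕ), k ≤ j →
    (Gw k l).count j = l.getD (j - k) 0 := by
  intro l
  induction l with
  | nil => intro k j _; simp [Gw_nil]
  | cons a l ih =>
    intro k j hkj
    rw [Gw_cons, List.count_append]
    rcases Nat.eq_or_lt_of_le hkj with rfl | hlt
    · rw [List.count_replicate, if_pos (by simp)]
      have h0 : (Gw (k + 1) l).count k = 0 := by
        rw [List.count_eq_zero]
        intro hmem
        have := mem_Gw l (k + 1) k hmem
        omega
      simp [h0]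
    · rw [List.count_replicate, if_neg (by simp; omega), ih (k + 1) j (by omega)]
      rw [show j - k = (j - (k + 1)) + 1 by omega]
      simp

lemma list_split (ν : List ℕ) (c : ℕ) (h : c + 1 < ν.length) :
    ν = ν.take c ++ ν.getD c 0 :: ν.getD (c + 1) 0 :: ν.drop (c + 2) := by
  have h1 : ν.drop c = ν[c]'(by omega) :: ν.drop (c + 1) :=
    List.drop_eq_getElem_cons (by omega)
  have h2 : ν.drop (c + 1) = ν[c + 1]'(by omega) :: ν.drop (c + 2) :=
    List.drop_eq_getElem_cons (by omega)
  rw [List.getD_eq_getElem _ _ (show c < ν.length by omega),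
    List.getD_eq_getElem _ _ (show c + 1 < ν.length by omega)]
  conv_lhs => rw [← List.take_append_drop c ν]
  rw [h1, h2]

lemma rowWord_split (t u : List ℕ) (a b : ℕ) :
    rowWord (t ++ a :: b :: u) = mid t.length a b (Gw 0 t) (Gw (t.length + 2) u) := by
  rw [rowWord_eq_Gw, Gw_append, Gw_cons, Gw_cons, mid_def]
  simp [Nat.add_assoc]

lemma Gw0_avoid (t : List ℕ) : ∀ x ∈ Gw 0 t, x ≠ t.length ∧ x ≠ t.length + 1 := by
  intro x hx
  have := mem_Gw t 0 x hx
  omega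

lemma Gw2_avoid (t u : List ℕ) : ∀ x ∈ Gw (t.length + 2) u,
    x ≠ t.length ∧ x ≠ t.length + 1 := by
  intro x hx
  have := mem_Gw u (t.length + 2) x hx
  omega

lemma sigma_rowWord (t u : List ℕ) (a b : ℕ) :
    sigma t.length (rowWord (t ++ a :: b :: u)) = rowWord (t ++ b :: a :: u) := by
  rw [rowWord_split, rowWord_split, sigma_mid _ _ _ _ _ (Gw0_avoid t) (Gw2_avoid t u)]

lemma iter_eps_isSome (t u : List ℕ) : ∀ (k a b : ℕ),
    (iterOpt (eps t.length) k (rowWord (t ++ a :: b :: u))).isSome ↔ k ≤ b := by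
  intro k
  induction k with
  | zero => intro a b; simp [iterOpt]
  | succ k ih =>
    intro a b
    rw [iterOpt]
    cases b with
    | zero =>
      rw [rowWord_split, eps_mid_zero _ _ _ _ (Gw0_avoid t) (Gw2_avoid t u)]
      simp
    | succ b =>
      rw [rowWord_split, eps_mid_succ _ _ _ _ _ (Gw0_avoid t) (Gw2_avoid t u),
        Option.bind_some, ← rowWord_split]
      rw [ih (a + 1) b]
      omega

lemma iter_phi_isSome (t u : List ℕ) : ∀ (k a b : ℕ),
    (iterOpt (phi t.length) k (rowWord (t ++ a :: b :: u))).isSome ↔ k ≤ a := by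
  intro k
  induction k with
  | zero => intro a b; simp [iterOpt]
  | succ k ih =>
    intro a b
    rw [iterOpt]
    cases a with
    | zero =>
      rw [rowWord_split, phi_mid_zero _ _ _ _ (Gw0_avoid t) (Gw2_avoid t u)]
      simp
    | succ a =>
      rw [rowWord_split, phi_mid_succ _ _ _ _ _ (Gw0_avoid t) (Gw2_avoid t u),
        Option.bind_some, ← rowWord_split]
      rw [ih a (b + 1)]
      omega

lemma epsMax_rowWord (t u : List ℕ) (a b : ℕ) :
    epsMax t.length (rowWord (t ++ a :: b :: u)) = b := by
  have hset : {k | (iterOpt (eps t.length) k (rowWord (t ++ a :: b :: u))).isSome}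
      = Set.Iic b := Set.ext fun k => by
    simp only [Set.mem_setOf_eq, Set.mem_Iic, iter_eps_isSome]
  rw [epsMax, hset, csSup_Iic]

lemma phiMax_rowWord (t u : List ℕ) (a b : ℕ) :
    phiMax t.length (rowWord (t ++ a :: b :: u)) = a := by
  have hset : {k | (iterOpt (phi t.length) k (rowWord (t ++ a :: b :: u))).isSome}
      = Set.Iic a := Set.ext fun k => by
    simp only [Set.mem_setOf_eq, Set.mem_Iic, iter_phi_isSome]
  rw [phiMax, hset, csSup_Iic]

lemma dExp_rowWord (t u : List ℕ) (a b : ℕ) :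
    dExp t.length (rowWord (t ++ a :: b :: u)) = min a b := by
  rw [dExp, epsMax_rowWord, phiMax_rowWord, Nat.min_comm]

-- Stage 5: the S_{n+1}-action on weight functions
/-- The sorted word with letter multiplicities given by `g`. -/
def toWord {N : ℕ} (g : Fin N → ℕ) : Word := rowWord (List.ofFn g)

lemma sigma_rowWord' (c : ℕ) (t u : List ℕ) (ht : t.length = c) (a b : ℕ) :
    sigma c (rowWord (t ++ a :: b :: u)) = rowWord (t ++ b :: a :: u) := by
  subst ht; exact sigma_rowWord t u a b

lemma dExp_rowWord' (c : ℕ) (t u : List ℕ) (ht : t.length = c) (a b : ℕ) :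
    dExp c (rowWord (t ++ a :: b :: u)) = min a b := by
  subst ht; exact dExp_rowWord t u a b

lemma set2_cons (t u : List ℕ) (a b x y : ℕ) :
    ((t ++ a :: b :: u).set t.length x).set (t.length + 1) y = t ++ x :: y :: u := by
  have h1 := set_after t (a :: b :: u) 0 x
  rw [Nat.add_zero] at h1
  have h2 := set_after t (x :: b :: u) 1 y
  rw [h1, List.set_cons_zero, h2, List.set_cons_succ, List.set_cons_zero]

lemma set_set_split (ν : List ℕ) (c : ℕ) (h : c + 1 < ν.length) (x y : ℕ) :
    (ν.set c x).set (c + 1) y = ν.take c ++ x :: y :: ν.drop (c + 2) := by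
  have key := set2_cons (ν.take c) (ν.drop (c + 2)) (ν.getD c 0) (ν.getD (c + 1) 0) x y
  have hlen : (ν.take c).length = c := by simp; omega
  rw [hlen] at key
  conv_lhs => rw [list_split ν c h]
  rw [key]

lemma set_set_ofFn {N : ℕ} (g : Fin N → ℕ) (c : ℕ) (h : c + 1 < N) :
    ((List.ofFn g).set c (g ⟨c + 1, h⟩)).set (c + 1) (g ⟨c, by omega⟩)
      = List.ofFn (g ∘ Equiv.swap (⟨c, by omega⟩ : Fin N) ⟨c + 1, h⟩) := by
  apply List.ext_getElem
  · simp
  · intro i h1 h2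
    rw [List.getElem_set, List.getElem_set, List.getElem_ofFn, List.getElem_ofFn]
    simp only [Function.comp_apply]
    have hiN : i < N := by simpa using h2
    rcases eq_or_ne c i with rfl | hci
    · rw [if_neg (by omega), if_pos rfl]
      rw [Equiv.swap_apply_left]
    · rcases eq_or_ne (c + 1) i with rfl | hci1
      · rw [if_pos rfl]
        rw [show (⟨c + 1, hiN⟩ : Fin N) = (⟨c + 1, h⟩ : Fin N) from rfl,
          Equiv.swap_apply_right]
      · rw [if_neg hci1, if_neg hci]
        rw [Equiv.swap_apply_of_ne_of_ne (by simp [Fin.ext_iff]; omega)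
          (by simp [Fin.ext_iff]; omega)]

lemma ofFn_swap {N : ℕ} (g : Fin N → ℕ) (c : ℕ) (h : c + 1 < N) :
    List.ofFn (g ∘ Equiv.swap (⟨c, by omega⟩ : Fin N) ⟨c + 1, h⟩)
      = (List.ofFn g).take c ++ g ⟨c + 1, h⟩ :: g ⟨c, by omega⟩ :: (List.ofFn g).drop (c + 2) := by
  rw [← set_set_ofFn g c h, set_set_split _ _ (by simpa using h)]

lemma getD_ofFn {N : ℕ} (g : Fin N → ℕ) (c : ℕ) (h : c < N) :
    (List.ofFn g).getD c 0 = g ⟨c, h⟩ := by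
  rw [List.getD_eq_getElem _ _ (by simpa using h), List.getElem_ofFn]

lemma sigma_toWord {N : ℕ} (g : Fin N → ℕ) (c : ℕ) (h : c + 1 < N) :
    sigma c (toWord g) = toWord (g ∘ Equiv.swap (⟨c, by omega⟩ : Fin N) ⟨c + 1, h⟩) := by
  rw [toWord, toWord, ofFn_swap g c h]
  conv_lhs => rw [list_split (List.ofFn g) c (by simpa using h),
    getD_ofFn g c (by omega), getD_ofFn g (c + 1) h]
  exact sigma_rowWord' c _ _ (by simp; omega) _ _

lemma dExp_toWord {N : ℕ} (g : Fin N → ℕ) (c : ℕ) (h : c + 1 < N) :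
    dExp c (toWord g) = min (g ⟨c, by omega⟩) (g ⟨c + 1, h⟩) := by
  rw [toWord]
  conv_lhs => rw [list_split (List.ofFn g) c (by simpa using h),
    getD_ofFn g c (by omega), getD_ofFn g (c + 1) h]
  exact dExp_rowWord' c _ _ (by simp; omega) _ _

-- Stage 6: the orbit of a sorted word
lemma reachable_foldl {n : ℕ} :
    ∀ (l : List ℕ), (∀ c ∈ l, c < n) → ∀ g : Fin (n + 1) → ℕ,
      ∃ σ : Equiv.Perm (Fin (n + 1)),
        l.foldl (fun v c => sigma c v) (toWord g) = toWord (g ∘ σ) := by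
  intro l
  induction l with
  | nil =>
    intro _ g
    exact ⟨Equiv.refl _, by simp⟩
  | cons c l ih =>
    intro hl g
    have hc : c + 1 < n + 1 := by
      have := hl c List.mem_cons_self; omega
    rw [List.foldl_cons, sigma_toWord g c hc]
    obtain ⟨σ, hσ⟩ := ih (fun x hx => hl x (List.mem_cons_of_mem _ hx))
      (g ∘ Equiv.swap (⟨c, by omega⟩ : Fin (n + 1)) ⟨c + 1, hc⟩)
    refine ⟨σ.trans (Equiv.swap (⟨c, by omega⟩ : Fin (n + 1)) ⟨c + 1, hc⟩), ?_⟩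
    rw [hσ]
    congr 1

lemma reachable_perm {n : ℕ} (σ : Equiv.Perm (Fin (n + 1))) :
    ∀ g : Fin (n + 1) → ℕ, ∃ l : List ℕ, (∀ c ∈ l, c < n) ∧
      l.foldl (fun v c => sigma c v) (toWord g) = toWord (g ∘ σ) := by
  have hσ : σ ∈ Submonoid.closure
      (Set.range fun i : Fin n => Equiv.swap i.castSucc i.succ) := by
    rw [Equiv.Perm.mclosure_swap_castSucc_succ]; trivial
  induction hσ using Submonoid.closure_induction with
  | mem x hx =>
    obtain ⟨i, rfl⟩ := hx
    intro g
    refine ⟨[(i : ℕ)], by simp, ?_⟩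
    simp only [List.foldl_cons, List.foldl_nil]
    have h : (i : ℕ) + 1 < n + 1 := by omega
    have e1 : (⟨(i : ℕ), by omega⟩ : Fin (n + 1)) = i.castSucc := by ext; simp
    have e2 : (⟨(i : ℕ) + 1, h⟩ : Fin (n + 1)) = i.succ := by ext; simp
    rw [sigma_toWord g i h, e1, e2]
  | one =>
    intro g
    exact ⟨[], by simp, by simp⟩
  | mul x y hx hy ihx ihy =>
    intro g
    obtain ⟨l1, hl1, he1⟩ := ihx g
    obtain ⟨l2, hl2, he2⟩ := ihy (g ∘ x)
    refine ⟨l1 ++ l2, ?_, ?_⟩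
    · intro c hc
      rcases List.mem_append.mp hc with h | h
      exacts [hl1 c h, hl2 c h]
    · rw [List.foldl_append, he1, he2]
      congr 1

lemma mem_wordsOf {n L : ℕ} {w : Word} :
    w ∈ wordsOf n L ↔ w.length = L ∧ ∀ x ∈ w, x < n + 1 := by
  constructor
  · intro hw
    rw [wordsOf, Finset.mem_image] at hw
    obtain ⟨f, -, rfl⟩ := hw
    refine ⟨by simp, ?_⟩
    intro x hx
    simp only [List.mem_map] at hx
    obtain ⟨y, -, rfl⟩ := hx
    exact y.isLt
  · rintro ⟨rfl, h2⟩
    rw [wordsOf, Finset.mem_image]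
    refine ⟨fun i => ⟨w.get i, h2 _ (List.get_mem w i)⟩, Finset.mem_univ _, ?_⟩
    apply List.ext_getElem
    · simp
    · intro i h1 h2'
      simp [List.getElem_map, List.getElem_ofFn, List.get_eq_getElem]

lemma length_rowWord (l : List ℕ) : (rowWord l).length = l.sum := by
  rw [rowWord_eq_Gw]; exact length_Gw l 0

lemma mem_rowWord (l : List ℕ) (x : ℕ) (hx : x ∈ rowWord l) : x < l.length := by
  rw [rowWord_eq_Gw] at hx
  have := mem_Gw l 0 x hx
  omega

lemma count_toWord {N : ℕ} (g : Fin N → ℕ) (j : Fin N) :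
    (toWord g).count (j : ℕ) = g j := by
  rw [toWord, rowWord_eq_Gw, count_Gw _ 0 _ (Nat.zero_le _), Nat.sub_zero,
    getD_ofFn g _ j.isLt]

lemma toWord_inj {N : ℕ} {g₁ g₂ : Fin N → ℕ} (h : toWord g₁ = toWord g₂) : g₁ = g₂ := by
  funext j
  rw [← count_toWord g₁ j, ← count_toWord g₂ j, h]

lemma Gw_zeros : ∀ (m k : ℕ), Gw k (List.replicate m 0) = [] := by
  intro m
  induction m with
  | zero => intro k; rfl
  | succ m ih => intro k; rw [List.replicate_succ, Gw_cons, ih]; rfl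

lemma rowWord_pad (l : List ℕ) (m : ℕ) :
    rowWord (l ++ List.replicate m 0) = rowWord l := by
  rw [rowWord_eq_Gw, Gw_append, Gw_zeros, List.append_nil, rowWord_eq_Gw]

lemma ofFn_pad (n : ℕ) (mu : List ℕ) (hlen : mu.length ≤ n + 1) :
    List.ofFn (fun j : Fin (n + 1) => mu.getD (j : ℕ) 0)
      = mu ++ List.replicate (n + 1 - mu.length) 0 := by
  apply List.ext_getElem
  · simp; omega
  · intro i h1 h2
    rw [List.getElem_ofFn]
    simp only [Fin.val_mk]
    by_cases hi : i < mu.length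
    · rw [List.getElem_append_left hi]
      exact List.getD_eq_getElem mu 0 hi
    · rw [List.getElem_append_right (by omega)]
      rw [List.getD_eq_default _ _ (by omega), List.getElem_replicate]

lemma rowWord_eq_toWord (n : ℕ) (mu : List ℕ) (hlen : mu.length ≤ n + 1) :
    rowWord mu = toWord (fun j : Fin (n + 1) => mu.getD (j : ℕ) 0) := by
  rw [toWord, ofFn_pad n mu hlen, rowWord_pad]

lemma orbit_eq (n : ℕ) (m : Fin (n + 1) → ℕ) :
    orbit n (toWord m)
      = Finset.image (fun σ : Equiv.Perm (Fin (n + 1)) => toWord (m ∘ σ)) Finset.univ := by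
  classical
  ext w
  rw [orbit, Finset.mem_filter, Finset.mem_image]
  constructor
  · rintro ⟨-, l, hl, rfl⟩
    obtain ⟨σ, hσ⟩ := reachable_foldl l hl m
    exact ⟨σ, Finset.mem_univ _, hσ.symm⟩
  · rintro ⟨σ, -, rfl⟩
    refine ⟨?_, ?_⟩
    · rw [mem_wordsOf]
      refine ⟨?_, ?_⟩
      · rw [toWord, length_rowWord, toWord, length_rowWord, List.sum_ofFn, List.sum_ofFn]
        exact Equiv.sum_comp σ m
      · intro x hx
        have := mem_rowWord _ x hx
        simpa using this
    · obtain ⟨l, hl, he⟩ := reachable_perm σ m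
      exact ⟨l, hl, he.symm⟩

-- Stage 7: sums over the symmetric group
lemma dPrime_toWord {n : ℕ} (g : Fin (n + 1) → ℕ) :
    dPrime n (toWord g) = ∑ i : Fin n, (n - (i : ℕ)) * min (g i.castSucc) (g i.succ) := by
  rw [dPrime, ← Fin.sum_univ_eq_sum_range (fun c => (n - c) * dExp c (toWord g)) n]
  apply Finset.sum_congr rfl
  intro i _
  rw [dExp_toWord g (i : ℕ) (by omega)]
  rfl

lemma sum_perm_head {N : ℕ} (g : Fin (N + 1) → ℕ) :
    ∑ σ : Equiv.Perm (Fin (N + 1)), g (σ 0) = N.factorial * ∑ p, g p := by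
  rw [← Equiv.sum_comp Equiv.Perm.decomposeFin.symm (fun σ => g (σ 0)), Fintype.sum_prod_type]
  simp only [Equiv.Perm.decomposeFin_symm_apply_zero, Finset.sum_const, Finset.card_univ,
    Fintype.card_perm, Fintype.card_fin, smul_eq_mul]
  rw [← Finset.mul_sum]

lemma sum_perm_two {M : ℕ} (g : Fin (M + 2) → Fin (M + 2) → ℕ) :
    ∑ σ : Equiv.Perm (Fin (M + 2)), g (σ 0) (σ 1)
      = M.factorial * ∑ p : Fin (M + 2), ∑ q ∈ Finset.univ.erase p, g p q := by
  rw [← Equiv.sum_comp Equiv.Perm.decomposeFin.symm (fun σ => g (σ 0) (σ 1)),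
    Fintype.sum_prod_type]
  have h1 : ∀ (p : Fin (M + 2)) (e : Equiv.Perm (Fin (M + 1))),
      (Equiv.Perm.decomposeFin.symm (p, e)) 1 = Equiv.swap 0 p ((e 0).succ) := by
    intro p e
    rw [← Fin.succ_zero_eq_one, Equiv.Perm.decomposeFin_symm_apply_succ]
  simp only [Equiv.Perm.decomposeFin_symm_apply_zero, h1]
  have h2 : ∀ p : Fin (M + 2),
      ∑ e : Equiv.Perm (Fin (M + 1)), g p (Equiv.swap 0 p ((e 0).succ))
        = M.factorial * ∑ q : Fin (M + 1), g p (Equiv.swap 0 p q.succ) :=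
    fun p => sum_perm_head (fun q => g p (Equiv.swap 0 p q.succ))
  simp only [h2]
  rw [← Finset.mul_sum]
  congr 1
  apply Finset.sum_congr rfl
  intro p _
  refine Finset.sum_bij' (fun (q : Fin (M + 1)) (_ : q ∈ Finset.univ) => Equiv.swap 0 p q.succ)
    (fun (q : Fin (M + 2)) (hq : q ∈ Finset.univ.erase p) =>
      (Equiv.swap 0 p q).pred (fun h0 => ?_)) ?_ ?_ ?_ ?_ ?_
  · have : q = p := by
      have := (Equiv.swap 0 p).injective (h0.trans (Equiv.swap_apply_right 0 p).symm)
      exact this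
    exact (Finset.mem_erase.mp hq).1 this
  · intro q _
    rw [Finset.mem_erase]
    refine ⟨fun h => ?_, Finset.mem_univ _⟩
    have : q.succ = (0 : Fin (M + 2)) := by
      have := (Equiv.swap 0 p).injective (h.trans (Equiv.swap_apply_left 0 p).symm)
      exact this
    exact Fin.succ_ne_zero q this
  · intro q _
    exact Finset.mem_univ _
  · intro q _
    simp [Equiv.swap_apply_self, Fin.pred_succ]
  · intro q _
    simp [Fin.succ_pred, Equiv.swap_apply_self]
  · intro q _
    rfl

lemma exists_perm_pair {α : Type*} [DecidableEq α] {a b a' b' : α}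
    (hab : a ≠ b) (hab' : a' ≠ b') : ∃ τ : Equiv.Perm α, τ a' = a ∧ τ b' = b := by
  refine ⟨(Equiv.swap a a').trans (Equiv.swap ((Equiv.swap a a') b') b), ?_, ?_⟩
  · simp only [Equiv.trans_apply, Equiv.swap_apply_right]
    apply Equiv.swap_apply_of_ne_of_ne
    · intro h
      exact hab' ((Equiv.swap a a').injective ((Equiv.swap_apply_right a a').trans h))
    · exact hab
  · simp only [Equiv.trans_apply]
    exact Equiv.swap_apply_left _ _

lemma sum_pair_eq {N : ℕ} (m : Fin N → ℕ) (f : ℕ → ℕ → ℕ) {a b a' b' : Fin N}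
    (hab : a ≠ b) (hab' : a' ≠ b') :
    ∑ σ : Equiv.Perm (Fin N), f (m (σ a)) (m (σ b))
      = ∑ σ : Equiv.Perm (Fin N), f (m (σ a')) (m (σ b')) := by
  obtain ⟨τ, h1, h2⟩ := exists_perm_pair hab hab'
  exact Fintype.sum_equiv (Equiv.mulRight τ) _ _ (fun σ => by
    simp [Equiv.Perm.mul_apply, h1, h2])

lemma sum_erase_min {N : ℕ} (m : Fin N → ℕ) (hm : ∀ i j : Fin N, i ≤ j → m j ≤ m i) :
    ∑ p : Fin N, ∑ q ∈ Finset.univ.erase p, min (m p) (m q)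
      = 2 * ∑ j : Fin N, (j : ℕ) * m j := by
  have herase : ∀ p : Fin N, Finset.univ.erase p = Finset.Iio p ∪ Finset.Ioi p := by
    intro p
    ext q
    simp only [Finset.mem_erase, Finset.mem_univ, and_true, Finset.mem_union,
      Finset.mem_Iio, Finset.mem_Ioi]
    exact ne_iff_lt_or_gt
  have hdisj : ∀ p : Fin N, Disjoint (Finset.Iio p) (Finset.Ioi p) := by
    intro p
    apply Finset.disjoint_left.mpr
    intro q hq hq'
    simp only [Finset.mem_Iio] at hq
    simp only [Finset.mem_Ioi] at hq'
    exact absurd (hq.trans hq') (lt_irrefl q)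
  have hsplit : ∀ p : Fin N, ∑ q ∈ Finset.univ.erase p, min (m p) (m q)
      = ∑ q ∈ Finset.Iio p, min (m p) (m q) + ∑ q ∈ Finset.Ioi p, min (m p) (m q) := by
    intro p
    rw [herase p, Finset.sum_union (hdisj p)]
  simp only [hsplit]
  rw [Finset.sum_add_distrib]
  have hA : ∑ p : Fin N, ∑ q ∈ Finset.Iio p, min (m p) (m q)
      = ∑ p : Fin N, (p : ℕ) * m p := by
    apply Finset.sum_congr rfl
    intro p _
    have : ∀ q ∈ Finset.Iio p, min (m p) (m q) = m p := by
      intro q hq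
      rw [Finset.mem_Iio] at hq
      exact Nat.min_eq_left (hm q p (le_of_lt hq))
    rw [Finset.sum_congr rfl this, Finset.sum_const, Fin.card_Iio, smul_eq_mul]
  have hB : ∑ p : Fin N, ∑ q ∈ Finset.Ioi p, min (m p) (m q)
      = ∑ p : Fin N, (p : ℕ) * m p := by
    have hmin : ∀ (p : Fin N), ∀ q ∈ Finset.Ioi p, min (m p) (m q) = m q := by
      intro p q hq
      rw [Finset.mem_Ioi] at hq
      exact Nat.min_eq_right (hm p q (le_of_lt hq))
    have hIoi : ∀ p : Fin N, ∑ q ∈ Finset.Ioi p, m q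
        = ∑ q : Fin N, if p < q then m q else 0 := by
      intro p
      rw [← Finset.sum_filter]
      apply Finset.sum_congr _ (fun _ _ => rfl)
      ext q
      simp [Finset.mem_Ioi]
    have hIio : ∀ q : Fin N, ∑ p : Fin N, (if p < q then m q else 0)
        = (q : ℕ) * m q := by
      intro q
      rw [← Finset.sum_filter]
      have : Finset.filter (fun p => p < q) Finset.univ = Finset.Iio q := by
        ext p
        simp [Finset.mem_Iio]
      rw [this, Finset.sum_const, Fin.card_Iio, smul_eq_mul]
    calc ∑ p : Fin N, ∑ q ∈ Finset.Ioi p, min (m p) (m q)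
        = ∑ p : Fin N, ∑ q ∈ Finset.Ioi p, m q :=
          Finset.sum_congr rfl fun p _ => Finset.sum_congr rfl (hmin p)
      _ = ∑ p : Fin N, ∑ q : Fin N, if p < q then m q else 0 :=
          Finset.sum_congr rfl fun p _ => hIoi p
      _ = ∑ q : Fin N, ∑ p : Fin N, if p < q then m q else 0 := Finset.sum_comm
      _ = ∑ q : Fin N, (q : ℕ) * m q := Finset.sum_congr rfl fun q _ => hIio q
  rw [hA, hB]
  omega

lemma sum_fiber_const {N : ℕ} (m : Fin N → ℕ) (F : (Fin N → ℕ) → ℕ) :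
    ∑ σ : Equiv.Perm (Fin N), F (m ∘ σ)
      = ∑ ν ∈ Finset.image (fun σ : Equiv.Perm (Fin N) => m ∘ σ) Finset.univ,
          (Finset.univ.filter fun τ : Equiv.Perm (Fin N) => m ∘ τ = m).card * F ν := by
  classical
  rw [← Finset.sum_fiberwise_of_maps_to (g := fun σ : Equiv.Perm (Fin N) => m ∘ ⇑σ)
    (fun σ _ => Finset.mem_image_of_mem (fun σ : Equiv.Perm (Fin N) => m ∘ ⇑σ) (Finset.mem_univ σ))
    (fun σ => F (m ∘ σ))]
  apply Finset.sum_congr rfl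
  intro ν hν
  obtain ⟨σ₀, -, rfl⟩ := Finset.mem_image.mp hν
  calc ∑ σ ∈ Finset.univ.filter (fun σ : Equiv.Perm (Fin N) => m ∘ ⇑σ = m ∘ ⇑σ₀), F (m ∘ σ)
      = ∑ σ ∈ Finset.univ.filter (fun σ : Equiv.Perm (Fin N) => m ∘ ⇑σ = m ∘ ⇑σ₀), F (m ∘ σ₀) :=
        Finset.sum_congr rfl (fun σ hσ => by rw [(Finset.mem_filter.mp hσ).2])
    _ = (Finset.univ.filter fun σ : Equiv.Perm (Fin N) => m ∘ ⇑σ = m ∘ ⇑σ₀).card * F (m ∘ σ₀) := by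
        rw [Finset.sum_const, smul_eq_mul]
    _ = (Finset.univ.filter fun τ : Equiv.Perm (Fin N) => m ∘ ⇑τ = m).card * F (m ∘ σ₀) := by
        congr 1
        apply Finset.card_bij' (fun (σ : Equiv.Perm (Fin N)) _ => σ * σ₀⁻¹)
          (fun (τ : Equiv.Perm (Fin N)) _ => τ * σ₀)
        · intro σ hσ
          simp only [Finset.mem_filter, Finset.mem_univ, true_and] at hσ ⊢
          funext x
          have h := congrFun hσ (σ₀⁻¹ x)
          simpa [Equiv.Perm.mul_apply, Equiv.Perm.inv_def, Equiv.apply_symm_apply] using h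
        · intro τ hτ
          simp only [Finset.mem_filter, Finset.mem_univ, true_and] at hτ ⊢
          funext x
          have h := congrFun hτ (σ₀ x)
          simpa [Equiv.Perm.mul_apply] using h
        · intro σ _
          simp [mul_assoc]
        · intro τ _
          simp [mul_assoc]

lemma sum_fin_mul_getD (n : ℕ) (mu : List ℕ) (hlen : mu.length ≤ n + 1) :
    ∑ j : Fin (n + 1), (j : ℕ) * mu.getD (j : ℕ) 0 = normMu mu := by
  rw [Fin.sum_univ_eq_sum_range (fun j => j * mu.getD j 0) (n + 1), normMu]
  symm
  apply Finset.sum_subset (Finset.range_subset_range.mpr (by omega))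
  intro x _ hx
  simp only [Finset.mem_range, not_lt] at hx
  rw [List.getD_eq_default _ _ hx, Nat.mul_zero]

lemma gauss (M : ℕ) :
    2 * ∑ c ∈ Finset.range (M + 1), (M + 1 - c) = (M + 1) * (M + 2) := by
  have h1 : ∑ c ∈ Finset.range (M + 1), (M + 1 - c)
      = ∑ c ∈ Finset.range (M + 1), (c + 1) := by
    rw [← Finset.sum_range_reflect]
    apply Finset.sum_congr rfl
    intro c hc
    simp only [Finset.mem_range] at hc
    omega
  have h2 : ∑ c ∈ Finset.range (M + 2), c = ∑ c ∈ Finset.range (M + 1), (c + 1) := by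
    rw [Finset.sum_range_succ' (fun c => c) (M + 1)]
    simp
  have h3 := Finset.sum_range_id_mul_two (M + 2)
  rw [h1, ← h2, Nat.mul_comm, h3]
  simp [Nat.mul_comm]

/-- For a partition `μ` of length at most `n+1` and the row
tableau `t_μ = a_1^{μ_1} ⋯ a_{n+1}^{μ_{n+1}}`, the arithmetic mean `b'(t_μ)`
of `d'(t') = Σ_{i=1}^n (n-i+1) d_i(t')` over the `S_{n+1}`-orbit of `t_μ`
equals `‖μ‖ = Σ_i (i-1) μ_i` (stated as `Σ_{t'} d'(t') = ‖μ‖ · |O_{t_μ}|`). -/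
theorem mean_dPrime_of_rowWord
    (n : ℕ) (hn : 1 ≤ n) (mu : List ℕ)
    (hmu : mu.Pairwise (· ≥ ·)) (hlen : mu.length ≤ n + 1) :
    ∑ v ∈ orbit n (rowWord mu), dPrime n v
      = normMu mu * (orbit n (rowWord mu)).card := by
  classical
  cases n with
  | zero => exact absurd hn (by omega)
  | succ M =>
  set m : Fin (M + 2) → ℕ := fun j => mu.getD (j : ℕ) 0 with hm_def
  have hmono : ∀ i j : Fin (M + 2), i ≤ j → m j ≤ m i := by
    intro i j hij
    by_cases hj : (j : ℕ) < mu.length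
    · have hij' : (i : ℕ) ≤ (j : ℕ) := hij
      have hi : (i : ℕ) < mu.length := lt_of_le_of_lt hij' hj
      rcases eq_or_lt_of_le hij with rfl | hl
      · exact le_refl _
      · have hrel := hmu.rel_get_of_lt
          (a := ⟨(i : ℕ), hi⟩) (b := ⟨(j : ℕ), hj⟩) (by simpa [Fin.mk_lt_mk] using hl)
        simp only [hm_def, List.get_eq_getElem] at hrel ⊢
        rw [List.getD_eq_getElem _ _ hi, List.getD_eq_getElem _ _ hj]
        exact hrel
    · simp only [hm_def]
      rw [List.getD_eq_default _ _ (by omega)]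
      exact Nat.zero_le _
  have hrow : rowWord mu = toWord m := rowWord_eq_toWord (M + 1) mu hlen
  rw [hrow, orbit_eq (M + 1) m]
  have himg : Finset.image (fun σ : Equiv.Perm (Fin (M + 2)) => toWord (m ∘ σ)) Finset.univ
      = (Finset.image (fun σ : Equiv.Perm (Fin (M + 2)) => m ∘ ⇑σ) Finset.univ).image toWord := by
    rw [Finset.image_image]
    rfl
  rw [himg]
  set W : Finset (Fin (M + 2) → ℕ) :=
    Finset.image (fun σ : Equiv.Perm (Fin (M + 2)) => m ∘ ⇑σ) Finset.univ with hW
  have hinj : Function.Injective (toWord (N := M + 2)) := fun _ _ h => toWord_inj h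
  rw [Finset.sum_image (fun x _ y _ h => hinj h), Finset.card_image_of_injective _ hinj]
  set K := (Finset.univ.filter fun τ : Equiv.Perm (Fin (M + 2)) => m ∘ ⇑τ = m).card with hK
  have hKpos : 0 < K := by
    rw [hK]
    apply Finset.card_pos.mpr
    refine ⟨1, ?_⟩
    simp only [Finset.mem_filter, Finset.mem_univ, true_and]
    funext x
    simp
  have hfib := sum_fiber_const m (fun ν => dPrime (M + 1) (toWord ν))
  have hfib1 := sum_fiber_const m (fun _ => 1)
  have hcard : Nat.factorial (M + 2) = K * W.card := by
    have hu : ∑ _σ : Equiv.Perm (Fin (M + 2)), (1 : ℕ) = Nat.factorial (M + 2) := by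
      simp [Finset.card_univ, Fintype.card_perm, Fintype.card_fin]
    rw [← hu, hfib1, ← hW, ← hK]
    rw [Finset.sum_const, smul_eq_mul]
    ring
  have htotal : ∑ σ : Equiv.Perm (Fin (M + 2)), dPrime (M + 1) (toWord (m ∘ σ))
      = normMu mu * Nat.factorial (M + 2) := by
    have hstep1 : ∀ σ : Equiv.Perm (Fin (M + 2)), dPrime (M + 1) (toWord (m ∘ σ))
        = ∑ i : Fin (M + 1), (M + 1 - (i : ℕ)) * min (m (σ i.castSucc)) (m (σ i.succ)) := by
      intro σ
      rw [dPrime_toWord (m ∘ σ)]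
      rfl
    have hS : ∀ i : Fin (M + 1),
        ∑ σ : Equiv.Perm (Fin (M + 2)), min (m (σ i.castSucc)) (m (σ i.succ))
          = ∑ σ : Equiv.Perm (Fin (M + 2)), min (m (σ 0)) (m (σ 1)) :=
      fun i => sum_pair_eq m min (Fin.castSucc_lt_succ (i := i)).ne (by simp [Fin.ext_iff])
    have hSval : ∑ σ : Equiv.Perm (Fin (M + 2)), min (m (σ 0)) (m (σ 1))
        = M.factorial * (2 * normMu mu) := by
      rw [sum_perm_two (fun p q => min (m p) (m q))]
      congr 1
      rw [sum_erase_min m hmono]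
      congr 1
      exact sum_fin_mul_getD (M + 1) mu hlen
    calc ∑ σ : Equiv.Perm (Fin (M + 2)), dPrime (M + 1) (toWord (m ∘ σ))
        = ∑ σ : Equiv.Perm (Fin (M + 2)), ∑ i : Fin (M + 1),
            (M + 1 - (i : ℕ)) * min (m (σ i.castSucc)) (m (σ i.succ)) :=
          Finset.sum_congr rfl fun σ _ => hstep1 σ
      _ = ∑ i : Fin (M + 1), ∑ σ : Equiv.Perm (Fin (M + 2)),
            (M + 1 - (i : ℕ)) * min (m (σ i.castSucc)) (m (σ i.succ)) := Finset.sum_comm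
      _ = ∑ i : Fin (M + 1), (M + 1 - (i : ℕ)) * (M.factorial * (2 * normMu mu)) := by
          apply Finset.sum_congr rfl
          intro i _
          rw [← Finset.mul_sum, hS i, hSval]
      _ = (∑ i : Fin (M + 1), (M + 1 - (i : ℕ))) * (M.factorial * (2 * normMu mu)) := by
          rw [Finset.sum_mul]
      _ = normMu mu * Nat.factorial (M + 2) := by
          rw [Fin.sum_univ_eq_sum_range (fun c => M + 1 - c) (M + 1)]
          have hg := gauss M
          rw [Nat.factorial_succ, Nat.factorial_succ]
          calc (∑ c ∈ Finset.range (M + 1), (M + 1 - c)) * (M.factorial * (2 * normMu mu))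
              = (2 * ∑ c ∈ Finset.range (M + 1), (M + 1 - c)) * (M.factorial * normMu mu) := by
                ring
            _ = ((M + 1) * (M + 2)) * (M.factorial * normMu mu) := by rw [hg]
            _ = normMu mu * ((M + 2) * ((M + 1) * M.factorial)) := by ring
  have h1 : K * ∑ ν ∈ W, dPrime (M + 1) (toWord ν)
      = K * (normMu mu * W.card) := by
    calc K * ∑ ν ∈ W, dPrime (M + 1) (toWord ν)
        = ∑ ν ∈ W, K * dPrime (M + 1) (toWord ν) := Finset.mul_sum _ _ _
      _ = ∑ σ : Equiv.Perm (Fin (M + 2)), dPrime (M + 1) (toWord (m ∘ σ)) := by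
          rw [hfib, ← hW, ← hK]
      _ = normMu mu * Nat.factorial (M + 2) := htotal
      _ = normMu mu * (K * W.card) := by rw [hcard]
      _ = K * (normMu mu * W.card) := by ring
  exact Nat.eq_of_mul_eq_mul_left hKpos h1


end PlacticCrystal
end

section
/- Every semistandard tableau of rectangular weight (k^{n+1}) over the alphabet {a_1 < … < a_{n+1}} is a fixed point of the action of S_{n+1} on tableaux, i.e. σ_i(t) = t for all 1 ≤ i ≤ n. -/
/-!
Common definitions: words over the alphabet {0,…,n} (letter `a_i` of the paper
is encoded as `i - 1`), crystal operators `ε_i, φ_i, σ_i` (colour `c = i - 1`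
acts on the letters `c, c+1`), plactic congruence, tableau reading words,
cyclage, charge, orbits under the Weyl group action, and the various
Kostka-type polynomials.
-/

namespace PlacticCrystal

private lemma foldl_diff (i : ℕ) : ∀ (l : List (ℕ × ℕ)) (st : List ℕ × List ℕ),
    (((l.foldl
      (fun (st : List ℕ × List ℕ) (p : ℕ × ℕ) =>
        if p.2 = i + 1 then (st.1, p.1 :: st.2)
        else if p.2 = i then
          match st.2 with
          | [] => (st.1 ++ [p.1], [])
          | _ :: rest => (st.1, rest)
        else st) st).1.length : ℤ)
      - ((l.foldl
      (fun (st : List ℕ × List ℕ) (p : ℕ × ℕ) =>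
        if p.2 = i + 1 then (st.1, p.1 :: st.2)
        else if p.2 = i then
          match st.2 with
          | [] => (st.1 ++ [p.1], [])
          | _ :: rest => (st.1, rest)
        else st) st).2.length : ℤ))
    = (st.1.length : ℤ) - st.2.length
      + l.countP (fun p => p.2 = i) - l.countP (fun p => p.2 = i + 1)
  | [], st => by simp
  | p :: l, st => by
    rw [List.foldl_cons]
    by_cases h1 : p.2 = i + 1
    · simp only [h1, if_pos rfl]
      rw [foldl_diff i l]
      have : ¬ (i + 1 = i) := by omega
      simp [List.countP_cons, h1, this]
      ring
    · by_cases h2 : p.2 = i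
      · simp only [if_neg h1, h2, if_pos rfl]
        cases hst : st.2 with
        | nil =>
          rw [foldl_diff i l]
          have : ¬ (i = i + 1) := by omega
          simp [List.countP_cons, h2, this, hst]
          ring
        | cons a rest =>
          rw [foldl_diff i l]
          have : ¬ (i = i + 1) := by omega
          simp [List.countP_cons, h2, this, hst]
          ring
      · simp only [if_neg h1, if_neg h2]
        rw [foldl_diff i l]
        simp [List.countP_cons, h1, h2]

private lemma enumFrom_countP (i : ℕ) : ∀ (k : ℕ) (w : Word),
    ((w.zipIdx k).map Prod.swap).countP (fun p => p.2 = i) = w.count i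
  | _, [] => by simp
  | k, a :: w => by
    simp only [List.zipIdx_cons, List.map_cons, Prod.swap_prod_mk, List.countP_cons,
      List.count_cons, enumFrom_countP i (k + 1) w]
    by_cases h : a = i <;> simp [h]

private lemma bracketState_lengths_eq (i : ℕ) (w : Word)
    (h : w.count i = w.count (i + 1)) :
    (bracketState i w).1.length = (bracketState i w).2.length := by
  have := foldl_diff i (w.zipIdx.map Prod.swap) (([], []) : List ℕ × List ℕ)
  rw [enumFrom_countP, enumFrom_countP] at this
  have h' : ((bracketState i w).1.length : ℤ) - (bracketState i w).2.length = 0 := by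
    rw [bracketState, this]
    simp [h]
  omega

private lemma sigma_eq_of_count_eq (i : ℕ) (w : Word)
    (h : w.count i = w.count (i + 1)) : sigma i w = w := by
  have hl := bracketState_lengths_eq i w h
  rw [sigma]
  rw [if_pos (le_of_eq hl.symm), ← hl, List.drop_length, List.foldl_nil]

/-- Every semistandard tableau of rectangular weight
`(k^{n+1})` is a fixed point of the action of `S_{n+1}`:
`σ_i(t) = t` for all `1 ≤ i ≤ n` (0-based colours `c < n`). -/
theorem sigma_fixes_rectangular_weight
    (n k : ℕ) (hn : 1 ≤ n) (sh : YoungDiagram) (w : Word)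
    (hw : IsTabOf n sh (List.replicate (n + 1) k) w)
    (c : ℕ) (hc : c < n) :
    sigma c w = w := by
  apply sigma_eq_of_count_eq
  have h1 := hw.2 c
  have h2 := hw.2 (c + 1)
  rw [List.getD_eq_getElem?_getD, List.getElem?_replicate] at h1 h2
  have hc1 : c < n + 1 := by omega
  have hc2 : c + 1 < n + 1 := by omega
  rw [if_pos hc1] at h1
  rw [if_pos hc2] at h2
  simp at h1 h2
  omega

end PlacticCrystal
end

section
/- Let t be a semistandard tableau of rectangular weight (k^{n+1}) over {a_1 < … < a_{n+1}}. Then there exists a unique tableau u of minimal weight such that the plactic product t·u is a Yamanouchi tableau; moreover u is itself a Yamanouchi tableau, and if y is the Yamanouchi tableau of weight (k^{n+1}) then t u ≡ u y ≡ y u in the plactic monoid. -/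
/-!
Common definitions: words over the alphabet {0,…,n} (letter `a_i` of the paper
is encoded as `i - 1`), crystal operators `ε_i, φ_i, σ_i` (colour `c = i - 1`
acts on the letters `c, c+1`), plactic congruence, tableau reading words,
cyclage, charge, orbits under the Weyl group action, and the various
Kostka-type polynomials.
-/

namespace PlacticCrystal

/-! ### Lattice statistics -/

/-- `Dd i w = count_{i+1} w - count_i w`. -/
def Dd (i : ℕ) (w : Word) : ℤ := (w.count (i + 1) : ℤ) - (w.count i : ℤ)

/-- `gg i w = max over suffixes s of w of Dd i s`. -/
def gg (i : ℕ) : Word → ℤ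
  | [] => 0
  | a :: w => max (gg i w) (Dd i (a :: w))

@[simp] lemma Dd_nil (i : ℕ) : Dd i ([] : Word) = 0 := by simp [Dd]

lemma Dd_cons (i a : ℕ) (w : Word) :
    Dd i (a :: w) = ((if a = i + 1 then 1 else 0) - (if a = i then 1 else 0)) + Dd i w := by
  simp only [Dd, List.count_cons]
  split_ifs <;> simp_all <;> omega

lemma Dd_append (i : ℕ) (u v : Word) : Dd i (u ++ v) = Dd i u + Dd i v := by
  simp only [Dd, List.count_append]; push_cast; ring

@[simp] lemma gg_nil (i : ℕ) : gg i ([] : Word) = 0 := rfl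

lemma gg_cons (i a : ℕ) (w : Word) : gg i (a :: w) = max (gg i w) (Dd i (a :: w)) := rfl

lemma gg_nonneg (i : ℕ) (w : Word) : 0 ≤ gg i w := by
  induction w with
  | nil => simp
  | cons a w ih => rw [gg_cons]; omega

lemma Dd_le_gg (i : ℕ) (w : Word) : Dd i w ≤ gg i w := by
  induction w with
  | nil => simp
  | cons a w ih => rw [gg_cons]; omega

lemma gg_append (i : ℕ) (u v : Word) :
    gg i (u ++ v) = max (gg i v) (gg i u + Dd i v) := by
  induction u with
  | nil =>
    have h1 := Dd_le_gg i v
    simp only [List.nil_append, gg_nil, zero_add]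
    omega
  | cons a u ih =>
    have : (a :: u) ++ v = a :: (u ++ v) := rfl
    rw [this, gg_cons, ih, gg_cons]
    have : Dd i (a :: (u ++ v)) = Dd i (a :: u) + Dd i v := by
      rw [show a :: (u ++ v) = (a :: u) ++ v from rfl, Dd_append]
    rw [this]
    omega

lemma gg_suffix_le (i : ℕ) {s w : Word} (h : s <:+ w) : gg i s ≤ gg i w := by
  obtain ⟨p, rfl⟩ := h
  rw [gg_append]; omega

lemma Dd_suffix_le (i : ℕ) {s w : Word} (h : s <:+ w) : Dd i s ≤ gg i w :=
  le_trans (Dd_le_gg i s) (gg_suffix_le i h)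

/-! ### Plactic invariants -/

lemma Plactic.perm {u v : Word} (h : Plactic u v) : u.Perm v := by
  induction h with
  | knuth1 _ _ => exact List.Perm.swap _ _ _
  | knuth2 _ _ => exact List.Perm.cons _ (List.Perm.swap _ _ _)
  | knuth3 _ => exact List.Perm.swap _ _ _
  | knuth4 _ => exact List.Perm.cons _ (List.Perm.swap _ _ _)
  | refl w => exact List.Perm.refl w
  | symm _ ih => exact ih.symm
  | trans _ _ ih1 ih2 => exact ih1.trans ih2
  | append _ _ ih1 ih2 => exact ih1.append ih2

lemma Plactic.count_eq {u v : Word} (h : Plactic u v) (a : ℕ) :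
    u.count a = v.count a := h.perm.count_eq a

lemma Plactic.Dd_eq {u v : Word} (h : Plactic u v) (i : ℕ) : Dd i u = Dd i v := by
  simp [Dd, h.count_eq]

lemma Plactic.gg_eq {u v : Word} (h : Plactic u v) (i : ℕ) : gg i u = gg i v := by
  induction h with
  | knuth1 hxy hyz =>
    rename_i x y z
    simp only [gg, Dd_cons, Dd_nil]
    split_ifs <;> omega
  | knuth2 hxy hyz =>
    rename_i x y z
    simp only [gg, Dd_cons, Dd_nil]
    split_ifs <;> omega
  | knuth3 hxy =>
    rename_i x y
    simp only [gg, Dd_cons, Dd_nil]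
    split_ifs <;> omega
  | knuth4 hxy =>
    rename_i x y
    simp only [gg, Dd_cons, Dd_nil]
    split_ifs <;> omega
  | refl w => rfl
  | symm h ih => omega
  | trans h1 h2 ih1 ih2 => omega
  | append h1 h2 ih1 ih2 =>
    rename_i u v u' v'
    rw [gg_append, gg_append, ih1, ih2, h2.Dd_eq]

/-! ### Derived Knuth moves -/

lemma pl_left (p : Word) {u v : Word} (h : Plactic u v) : Plactic (p ++ u) (p ++ v) :=
  Plactic.append (Plactic.refl p) h

lemma pl_right (s : Word) {u v : Word} (h : Plactic u v) : Plactic (u ++ s) (v ++ s) :=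
  Plactic.append h (Plactic.refl s)

lemma pl_cons (a : ℕ) {u v : Word} (h : Plactic u v) : Plactic (a :: u) (a :: v) :=
  pl_left [a] h

lemma rep_shift (m a : ℕ) (l : Word) :
    List.replicate m a ++ a :: l = a :: (List.replicate m a ++ l) := by
  have : List.replicate m a ++ a :: l = (List.replicate m a ++ [a]) ++ l := by simp
  rw [this, ← List.replicate_succ', List.replicate_succ]; simp

/-- Shuttle: `z y^{j+1} ≡ y^j z y` for `y < z`. -/
lemma pl_shuttle {y z : ℕ} (hyz : y < z) : ∀ j : ℕ,
    Plactic (z :: List.replicate (j + 1) y) (List.replicate j y ++ [z, y])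
  | 0 => by simp [List.replicate]; exact Plactic.refl _
  | (j + 1) => by
    have h1 : Plactic [z, y, y] [y, z, y] := Plactic.knuth3 hyz
    have step1 : Plactic (z :: List.replicate (j + 2) y)
        (y :: (z :: List.replicate (j + 1) y)) := by
      have : z :: List.replicate (j + 2) y = [z, y, y] ++ List.replicate j y := by
        simp [List.replicate_succ]
      rw [this]
      have : y :: (z :: List.replicate (j + 1) y) = [y, z, y] ++ List.replicate j y := by
        simp [List.replicate_succ]
      rw [this]
      exact pl_right _ h1
    have step2 : Plactic (y :: (z :: List.replicate (j + 1) y))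
        (y :: (List.replicate j y ++ [z, y])) := pl_cons y (pl_shuttle hyz j)
    have : y :: (List.replicate j y ++ [z, y]) = List.replicate (j + 1) y ++ [z, y] := by
      simp [List.replicate_succ]
    exact step1.trans (this ▸ step2)

/-- Column commutation: `x z^m y^m ≡ z^m x y^m` for `x ≤ y < z`. -/
lemma pl_column {x y z : ℕ} (hxy : x ≤ y) (hyz : y < z) : ∀ m : ℕ,
    Plactic (x :: (List.replicate m z ++ List.replicate m y))
      (List.replicate m z ++ x :: List.replicate m y)
  | 0 => by simp; exact Plactic.refl _
  | (m + 1) => by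
    have hxz : Plactic [x, z, y] [z, x, y] := by
      rcases lt_or_eq_of_le hxy with h | h
      · exact (Plactic.knuth1 h hyz).symm
      · subst h; exact (Plactic.knuth3 hyz).symm
    -- step A :  x z^{m+1} y^{m+1} ≡ x z^m (y^m z y)
    have hS := pl_shuttle hyz m
    have stepA : Plactic (x :: (List.replicate (m+1) z ++ List.replicate (m+1) y))
        ((x :: List.replicate m z) ++ (List.replicate m y ++ [z, y])) := by
      have e1 : x :: (List.replicate (m+1) z ++ List.replicate (m+1) y)
          = (x :: List.replicate m z) ++ (z :: List.replicate (m+1) y) := by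
        simp [List.replicate_succ']
      rw [e1]
      exact pl_left _ hS
    -- step B : use IH on  x z^m y^m
    have stepB : Plactic ((x :: (List.replicate m z ++ List.replicate m y)) ++ [z, y])
        ((List.replicate m z ++ x :: List.replicate m y) ++ [z, y]) :=
      pl_right _ (pl_column hxy hyz m)
    have eB : (x :: List.replicate m z) ++ (List.replicate m y ++ [z, y])
        = (x :: (List.replicate m z ++ List.replicate m y)) ++ [z, y] := by simp
    -- step C : un-shuttle after z^m x
    have stepC : Plactic ((List.replicate m z ++ [x]) ++ (List.replicate m y ++ [z, y]))
        ((List.replicate m z ++ [x]) ++ (z :: List.replicate (m+1) y)) :=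
      pl_left _ hS.symm
    have eC : (List.replicate m z ++ x :: List.replicate m y) ++ [z, y]
        = (List.replicate m z ++ [x]) ++ (List.replicate m y ++ [z, y]) := by simp
    -- step D : Knuth on the middle triple
    have stepD : Plactic (List.replicate m z ++ ([x, z, y] ++ List.replicate m y))
        (List.replicate m z ++ ([z, x, y] ++ List.replicate m y)) :=
      pl_left _ (pl_right _ hxz)
    have eD : (List.replicate m z ++ [x]) ++ (z :: List.replicate (m+1) y)
        = List.replicate m z ++ ([x, z, y] ++ List.replicate m y) := by
      simp [List.replicate_succ]
    have eE : List.replicate m z ++ ([z, x, y] ++ List.replicate m y)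
        = List.replicate (m+1) z ++ x :: List.replicate (m+1) y := by
      simp only [List.replicate_succ]
      rw [show ([z, x, y] ++ List.replicate m y : Word) = z :: x :: y :: List.replicate m y by simp]
      rw [show (z :: List.replicate m z ++ x :: y :: List.replicate m y : Word)
        = z :: (List.replicate m z ++ x :: y :: List.replicate m y) by simp]
      exact rep_shift m z _
    exact stepA.trans ((eB ▸ stepB).trans ((eC ▸ stepC).trans (eD ▸ eE ▸ stepD)))

/-! ### yamWord machinery -/

@[simp] lemma yam_nil : yamWord [] = [] := by simp [yamWord]

lemma yam_concat (l : List ℕ) (v : ℕ) :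
    yamWord (l ++ [v]) = List.replicate v l.length ++ yamWord l := by
  unfold yamWord
  rw [List.zipIdx_append]
  simp

lemma count_yam (lam : List ℕ) (a : ℕ) : (yamWord lam).count a = lam.getD a 0 := by
  induction lam using List.reverseRecOn with
  | nil => simp
  | append_singleton l v ih =>
    rw [yam_concat, List.count_append, ih, List.count_replicate]
    rcases lt_trichotomy a l.length with h | h | h
    · rw [List.getD_append _ _ _ _ h]
      simp [show ¬ (l.length == a) from by simp; omega]
    · subst h
      rw [List.getD_eq_default _ _ (le_refl _)]
      rw [List.getD_append_right _ _ _ _ (le_refl _)]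
      simp
    · rw [List.getD_eq_default _ _ (by omega), List.getD_eq_default _ _ (by simp; omega)]
      simp [show ¬ (l.length == a) from by simp; omega]

lemma mem_yam_lt {lam : List ℕ} {a : ℕ} (h : a ∈ yamWord lam) : a < lam.length := by
  by_contra hc
  have h1 : (yamWord lam).count a = 0 := by
    rw [count_yam, List.getD_eq_default _ _ (by omega)]
  rw [List.count_eq_zero] at h1
  exact h1 h

lemma Dd_replicate (i v L : ℕ) :
    Dd i (List.replicate v L)
      = (if L = i + 1 then (v : ℤ) else 0) - (if L = i then (v : ℤ) else 0) := by
  simp only [Dd, List.count_replicate]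
  split_ifs <;> simp_all <;> omega

lemma gg_replicate_le (i v L : ℕ) :
    gg i (List.replicate v L) ≤ if L = i + 1 then (v : ℤ) else 0 := by
  induction v with
  | zero => simp
  | succ v ih =>
    rw [List.replicate_succ, gg_cons, ← List.replicate_succ, Dd_replicate]
    split_ifs at * <;> push_cast at * <;> omega

lemma getD_anti {lam : List ℕ} (hs : lam.Pairwise (· ≥ ·)) {j1 j2 : ℕ} (h : j1 ≤ j2) :
    lam.getD j2 0 ≤ lam.getD j1 0 := by
  by_cases h2 : j2 < lam.length
  · have h1 : j1 < lam.length := lt_of_le_of_lt h h2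
    rw [List.getD_eq_getElem _ _ h1, List.getD_eq_getElem _ _ h2]
    rcases eq_or_lt_of_le h with rfl | hlt
    · exact le_refl _
    · exact hs.rel_get_of_lt (a := ⟨j1, h1⟩) (b := ⟨j2, h2⟩) hlt
  · rw [List.getD_eq_default _ _ (by omega)]
    exact Nat.zero_le _

lemma sorted_of_concat {l : List ℕ} {v : ℕ} (hs : (l ++ [v]).Pairwise (· ≥ ·)) :
    l.Pairwise (· ≥ ·) ∧ ∀ x ∈ l, v ≤ x := by
  rw [List.pairwise_append] at hs
  exact ⟨hs.1, fun x hx => hs.2.2 x hx v (by simp)⟩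

lemma lat_yam {lam : List ℕ} (hs : lam.Pairwise (· ≥ ·)) (i : ℕ) :
    gg i (yamWord lam) ≤ 0 := by
  induction lam using List.reverseRecOn with
  | nil => simp
  | append_singleton l v ih =>
    obtain ⟨hsl, hvle⟩ := sorted_of_concat hs
    rw [yam_concat, gg_append]
    have hDd : Dd i (yamWord l) = (l.getD (i+1) 0 : ℤ) - (l.getD i 0 : ℤ) := by
      simp [Dd, count_yam]
    have hrep := gg_replicate_le i v l.length
    have hyam := ih hsl
    rcases eq_or_ne l.length (i+1) with he | he
    · -- top block sits at letter i+1 : need getD l i ≥ v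
      have hi : i < l.length := by omega
      have hlast : v ≤ l.getD i 0 := by
        rw [List.getD_eq_getElem _ _ hi]
        exact hvle _ (List.getElem_mem _)
      have h0 : l.getD (i+1) 0 = 0 := List.getD_eq_default _ _ (by omega)
      rw [if_pos he] at hrep
      rw [hDd, h0]
      push_cast
      omega
    · rw [if_neg he] at hrep
      have : (l.getD (i+1) 0 : ℤ) ≤ (l.getD i 0 : ℤ) := by
        exact_mod_cast getD_anti hsl (Nat.le_succ i)
      rw [hDd]
      omega

lemma rep_split {v m L : ℕ} (h : v ≤ m) :
    List.replicate m L = List.replicate v L ++ List.replicate (m - v) L := by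
  rw [← List.replicate_add, Nat.add_sub_cancel' h]

/-- Inserting a letter `a` on the left of a Yamanouchi tableau word. -/
lemma yam_insert (lam : List ℕ) : ∀ (a : ℕ), lam.Pairwise (· ≥ ·) → a < lam.length →
    (a = 0 ∨ lam.getD a 0 < lam.getD (a - 1) 0) →
    Plactic (a :: yamWord lam) (yamWord (lam.set a (lam.getD a 0 + 1))) := by
  induction lam using List.reverseRecOn with
  | nil => intro a _ h _; simp at h
  | append_singleton l v ih =>
    intro a hs hlen hstrict
    obtain ⟨hsl, hvle⟩ := sorted_of_concat hs
    have hlen' : a ≤ l.length := by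
      simp only [List.length_append, List.length_cons, List.length_nil] at hlen; omega
    rcases eq_or_lt_of_le hlen' with he | hlt
    · -- `a` is the index of the (new) top block
      have hgd : (l ++ [v]).getD a 0 = v := by
        rw [he, List.getD_append_right _ _ _ _ (le_refl _)]; simp
      have hset : (l ++ [v]).set a (v + 1) = l ++ [v + 1] := by
        rw [he, List.set_append_right _ _ (le_refl _)]; simp
      rw [hgd, hset, yam_concat, yam_concat]
      have : a :: (List.replicate v l.length ++ yamWord l)
          = List.replicate (v + 1) l.length ++ yamWord l := by
        rw [he]; simp [List.replicate_succ]
      rw [this]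
      exact Plactic.refl _
    · -- `a` lies in `l`
      set c := l.getD a 0 + 1 with hc
      have hgd : (l ++ [v]).getD a 0 = l.getD a 0 := List.getD_append _ _ _ _ hlt
      have hgd' : (l ++ [v]).getD (a - 1) 0 = l.getD (a - 1) 0 :=
        List.getD_append _ _ _ _ (by omega)
      have hset : (l ++ [v]).set a c = (l.set a c) ++ [v] :=
        List.set_append_left _ _ hlt
      have hstrict' : a = 0 ∨ l.getD a 0 < l.getD (a - 1) 0 := by
        rcases hstrict with h | h
        · exact Or.inl h
        · right; rw [hgd, hgd'] at h; exact h
      have ihl := ih a hsl hlt hstrict'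
      rw [hgd, hset, yam_concat, yam_concat, List.length_set]
      rcases Nat.eq_zero_or_pos v with hv | hv
      · subst hv
        simp only [List.replicate, List.nil_append]
        exact ihl
      · -- main case : commute `a` past the top block
        obtain ⟨l', m', hl⟩ : ∃ l' m', l = l' ++ [m'] := by
          rcases List.eq_nil_or_concat l with h | ⟨l', m', h⟩
          · subst h; simp at hlt
          · exact ⟨l', m', by simpa [List.concat_eq_append] using h⟩
        subst hl
        have hm' : v ≤ m' := hvle m' (by simp)
        have hxy : a ≤ l'.length := by
          simp only [List.length_append, List.length_cons, List.length_nil] at hlt; omega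
        have hyz : l'.length < (l' ++ [m']).length := by simp
        have hcol := pl_column hxy hyz v
        set L := (l' ++ [m']).length with hL
        have hLval : L = l'.length + 1 := by simp [hL]
        set rest := List.replicate (m' - v) l'.length ++ yamWord l' with hrest
        have hyaml : yamWord (l' ++ [m']) = List.replicate v l'.length ++ rest := by
          rw [yam_concat, rep_split hm', hrest, List.append_assoc]
        have e1 : a :: (List.replicate v L ++ yamWord (l' ++ [m']))
            = (a :: (List.replicate v L ++ List.replicate v l'.length)) ++ rest := by
          rw [hyaml]; simp [List.append_assoc]
        have e2 : (List.replicate v L ++ a :: List.replicate v l'.length) ++ rest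
            = List.replicate v L ++ (a :: yamWord (l' ++ [m'])) := by
          rw [hyaml]; simp [List.append_assoc]
        have step1 : Plactic (a :: (List.replicate v L ++ yamWord (l' ++ [m'])))
            (List.replicate v L ++ (a :: yamWord (l' ++ [m']))) := by
          rw [e1, ← e2]
          exact pl_right rest hcol
        have step2 : Plactic (List.replicate v L ++ (a :: yamWord (l' ++ [m'])))
            (List.replicate v L ++ yamWord ((l' ++ [m']).set a c)) :=
          pl_left _ ihl
        exact step1.trans step2

lemma yam_eq_nil {lam : List ℕ} (h : ∀ x ∈ lam, x = 0) : yamWord lam = [] := by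
  induction lam using List.reverseRecOn with
  | nil => simp [yamWord]
  | append_singleton l v ih =>
    rw [yam_concat, h v (by simp), ih (fun x hx => h x (by simp [hx]))]
    rfl

/-! ### weightList and the master lemma -/

@[simp] lemma weightList_length (n : ℕ) (w : Word) : (weightList n w).length = n + 1 := by
  simp [weightList]

lemma weightList_getD_le {n j : ℕ} (w : Word) (h : j ≤ n) :
    (weightList n w).getD j 0 = w.count j := by
  rw [weightList, List.getD_eq_getElem _ _ (by simpa using Nat.lt_succ_of_le h)]
  simp

lemma weightList_getD_gt {n j : ℕ} (w : Word) (h : n < j) :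
    (weightList n w).getD j 0 = 0 :=
  List.getD_eq_default _ _ (by simpa using h)

lemma count_antitone_of_lat {w : Word} (hw : ∀ i, gg i w ≤ 0) {j1 j2 : ℕ} (h : j1 ≤ j2) :
    w.count j2 ≤ w.count j1 := by
  have key : ∀ i, w.count (i + 1) ≤ w.count i := by
    intro i
    have := le_trans (Dd_le_gg i w) (hw i)
    simp only [Dd] at this
    omega
  have aux : ∀ d, w.count (j1 + d) ≤ w.count j1 := by
    intro d
    induction d with
    | zero => exact le_refl _
    | succ m ih =>
      rw [Nat.add_succ]
      exact le_trans (key (j1 + m)) ih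
  have := aux (j2 - j1)
  rwa [Nat.add_sub_cancel' h] at this

lemma weightList_sorted {n : ℕ} {w : Word} (hw : ∀ i, gg i w ≤ 0) :
    (weightList n w).Pairwise (· ≥ ·) := by
  rw [weightList]
  refine (List.pairwise_lt_range).map _ ?_
  intro i j hij
  exact count_antitone_of_lat hw (le_of_lt hij)

lemma weightList_set {n a : ℕ} (w : Word) (h : a ≤ n) :
    (weightList n w).set a (w.count a + 1) = weightList n (a :: w) := by
  apply List.ext_getElem
  · simp [weightList]
  · intro j h1 h2
    simp only [weightList, List.length_set, List.length_map, List.length_range] at h1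
    rcases eq_or_ne j a with rfl | hne
    · rw [List.getElem_set_self]
      simp only [weightList, List.getElem_map, List.getElem_range]
      rw [List.count_cons_self]
    · rw [List.getElem_set_ne (by omega)]
      simp only [weightList, List.getElem_map, List.getElem_range]
      rw [List.count_cons_of_ne hne.symm]

/-- Master lemma : every lattice word over `{0,…,n}` is plactic-equivalent to
the Yamanouchi tableau word of its weight. -/
lemma master (n : ℕ) : ∀ w : Word, (∀ a ∈ w, a ≤ n) → (∀ i, gg i w ≤ 0) →
    Plactic w (yamWord (weightList n w)) := by
  intro w
  induction w with
  | nil =>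
    intro _ _
    have hz : ∀ x ∈ weightList n ([] : Word), x = 0 := by
      intro x hx
      simp only [weightList, List.mem_map] at hx
      obtain ⟨j, _, rfl⟩ := hx
      simp
    have : yamWord (weightList n ([] : Word)) = [] := yam_eq_nil hz
    rw [this]; exact Plactic.refl _
  | cons a w ih =>
    intro hle hlat
    have ha : a ≤ n := hle a (by simp)
    have hlatw : ∀ i, gg i w ≤ 0 := by
      intro i
      have := hlat i
      rw [gg_cons] at this
      omega
    have step1 : Plactic (a :: w) (a :: yamWord (weightList n w)) :=
      pl_cons a (ih (fun x hx => hle x (by simp [hx])) hlatw)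
    have hstrict : a = 0 ∨ (weightList n w).getD a 0 < (weightList n w).getD (a - 1) 0 := by
      rcases Nat.eq_zero_or_pos a with h0 | hpos
      · exact Or.inl h0
      · right
        rw [weightList_getD_le w ha, weightList_getD_le w (by omega)]
        have hDle : Dd (a - 1) (a :: w) ≤ 0 :=
          le_trans (le_max_right _ _) (by rw [← gg_cons]; exact hlat (a - 1))
        simp only [Dd, List.count_cons, beq_iff_eq, show a - 1 + 1 = a from by omega] at hDle
        split_ifs at hDle <;> omega
    have step2 : Plactic (a :: yamWord (weightList n w))
        (yamWord ((weightList n w).set a ((weightList n w).getD a 0 + 1))) :=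
      yam_insert (weightList n w) a (weightList_sorted hlatw) (by simp; omega) hstrict
    have : (weightList n w).set a ((weightList n w).getD a 0 + 1)
        = weightList n (a :: w) := by
      rw [weightList_getD_le w ha, weightList_set w ha]
    rw [this] at step2
    exact step1.trans step2

/-! ### flattenRows machinery -/

def flattenRows (f : ℕ → Word) (m : ℕ) : Word := ((List.range m).reverse.map f).flatten

@[simp] lemma flattenRows_zero (f : ℕ → Word) : flattenRows f 0 = [] := rfl

lemma flattenRows_succ (f : ℕ → Word) (m : ℕ) :
    flattenRows f (m + 1) = f m ++ flattenRows f m := by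
  simp [flattenRows, List.range_succ]

lemma readingWord_eq (sh : YoungDiagram) (T : SemistandardYoungTableau sh) :
    readingWord sh T
      = flattenRows (fun i => (List.range (sh.rowLen i)).map fun j => T i j) (sh.colLen 0) := rfl

lemma flattenRows_congr {f g : ℕ → Word} {m : ℕ} (h : ∀ i < m, f i = g i) :
    flattenRows f m = flattenRows g m := by
  induction m with
  | zero => rfl
  | succ k ih =>
    rw [flattenRows_succ, flattenRows_succ, h k (by omega),
      ih (fun i hi => h i (by omega))]

lemma flattenRows_pad {f : ℕ → Word} {r L : ℕ} (h : r ≤ L)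
    (hv : ∀ i, r ≤ i → i < L → f i = []) : flattenRows f L = flattenRows f r := by
  induction L with
  | zero => have : r = 0 := by omega
            subst this; rfl
  | succ k ih =>
    rcases eq_or_lt_of_le h with rfl | hlt
    · rfl
    · rw [flattenRows_succ, hv k (by omega) (by omega), List.nil_append]
      exact ih (by omega) (fun i h1 h2 => hv i h1 (by omega))

lemma count_flattenRows (f : ℕ → Word) (m a : ℕ) :
    (flattenRows f m).count a = ∑ i ∈ Finset.range m, (f i).count a := by
  induction m with
  | zero => simp
  | succ k ih => rw [flattenRows_succ, List.count_append, ih, Finset.sum_range_succ]; omega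

lemma mem_flattenRows {f : ℕ → Word} {m x : ℕ} (h : x ∈ flattenRows f m) :
    ∃ i < m, x ∈ f i := by
  induction m with
  | zero => simp [flattenRows] at h
  | succ k ih =>
    rw [flattenRows_succ, List.mem_append] at h
    rcases h with h | h
    · exact ⟨k, by omega, h⟩
    · obtain ⟨i, hi, hx⟩ := ih h
      exact ⟨i, by omega, hx⟩

lemma flattenRows_decomp {f : ℕ → Word} {i L : ℕ} (h : i < L) :
    ∃ A, flattenRows f L = A ++ (f i ++ flattenRows f i) := by
  induction L with
  | zero => omega
  | succ k ih =>
    rcases eq_or_lt_of_le (Nat.lt_succ_iff.mp h) with rfl | hlt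
    · exact ⟨[], by rw [flattenRows_succ]; simp⟩
    · obtain ⟨A, hA⟩ := ih hlt
      exact ⟨f k ++ A, by rw [flattenRows_succ, hA, List.append_assoc]⟩

lemma yam_eq_flattenRows (lam : List ℕ) :
    yamWord lam = flattenRows (fun i => List.replicate (lam.getD i 0) i) lam.length := by
  induction lam using List.reverseRecOn with
  | nil => simp [yamWord, flattenRows]
  | append_singleton l v ih =>
    rw [yam_concat, ih]
    have hlen : (l ++ [v]).length = l.length + 1 := by simp
    rw [hlen, flattenRows_succ]
    have h1 : (l ++ [v]).getD l.length 0 = v := by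
      rw [List.getD_append_right _ _ _ _ (le_refl _)]; simp
    rw [h1]
    congr 1
    apply flattenRows_congr
    intro i hi
    rw [List.getD_append _ _ _ _ hi]

/-! ### Tableau entries -/

lemma entry_ge_row {sh : YoungDiagram} (T : SemistandardYoungTableau sh) :
    ∀ i j, (i, j) ∈ sh → i ≤ T i j := by
  intro i
  induction i with
  | zero => intro j _; exact Nat.zero_le _
  | succ k ih =>
    intro j hmem
    have hk : (k, j) ∈ sh := sh.up_left_mem (Nat.le_succ k) (le_refl j) hmem
    have h1 : T k j < T (k + 1) j := T.col_strict (Nat.lt_succ_self k) hmem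
    have h2 := ih j hk
    show k + 1 ≤ T (k + 1) j
    omega

lemma colLen_le_of_entries {n : ℕ} {sh : YoungDiagram} {T : SemistandardYoungTableau sh}
    (hT : ∀ i j, (i, j) ∈ sh → T i j ≤ n) : sh.colLen 0 ≤ n + 1 := by
  by_contra hc
  have hmem : (n + 1, 0) ∈ sh := YoungDiagram.mem_iff_lt_colLen.mpr (by omega)
  have h1 := entry_ge_row T (n + 1) 0 hmem
  have h2 := hT (n + 1) 0 hmem
  omega

lemma rowLen_eq_zero_of_colLen_le {sh : YoungDiagram} {i : ℕ} (h : sh.colLen 0 ≤ i) :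
    sh.rowLen i = 0 := by
  by_contra h0
  have : (i, 0) ∈ sh := YoungDiagram.mem_iff_lt_rowLen.mpr (Nat.pos_of_ne_zero h0)
  rw [YoungDiagram.mem_iff_lt_colLen] at this
  omega

lemma letters_le_of_isTabShape {n : ℕ} {sh : YoungDiagram} {w : Word}
    (h : IsTabShape n sh w) : ∀ a ∈ w, a ≤ n := by
  obtain ⟨T, hT, rfl⟩ := h
  intro a ha
  rw [readingWord_eq] at ha
  obtain ⟨i, hi, hx⟩ := mem_flattenRows ha
  rw [List.mem_map] at hx
  obtain ⟨j, hj, rfl⟩ := hx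
  rw [List.mem_range] at hj
  exact hT i j (YoungDiagram.mem_iff_lt_rowLen.mpr hj)

/-! ### Constant-row tableaux -/

lemma reading_eq_yam {sh : YoungDiagram} {T : SemistandardYoungTableau sh}
    (hconst : ∀ i j, (i, j) ∈ sh → T i j = i) (lam : List ℕ)
    (hlen : sh.colLen 0 ≤ lam.length) (hrow : ∀ i, sh.rowLen i = lam.getD i 0) :
    readingWord sh T = yamWord lam := by
  rw [readingWord_eq, yam_eq_flattenRows]
  have h1 : flattenRows (fun i => List.replicate (lam.getD i 0) i) lam.length
      = flattenRows (fun i => List.replicate (lam.getD i 0) i) (sh.colLen 0) :=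
    flattenRows_pad hlen (fun i h1 _ => by
      rw [← hrow i, rowLen_eq_zero_of_colLen_le h1]; rfl)
  rw [h1]
  apply flattenRows_congr
  intro i hi
  have : ∀ j ∈ List.range (sh.rowLen i), T i j = i := by
    intro j hj
    rw [List.mem_range] at hj
    exact hconst i j (YoungDiagram.mem_iff_lt_rowLen.mpr hj)
  rw [← hrow i]
  calc (List.range (sh.rowLen i)).map (fun j => T i j)
      = (List.range (sh.rowLen i)).map (fun _ => i) := List.map_congr_left this
    _ = List.replicate (sh.rowLen i) i := by
        rw [List.map_const']; simp

lemma count_reading_const {sh : YoungDiagram} {T : SemistandardYoungTableau sh}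
    (hconst : ∀ i j, (i, j) ∈ sh → T i j = i) (a : ℕ) :
    (readingWord sh T).count a = sh.rowLen a := by
  rw [readingWord_eq, count_flattenRows]
  have hterm : ∀ i ∈ Finset.range (sh.colLen 0),
      ((List.range (sh.rowLen i)).map fun j => T i j).count a
        = if i = a then sh.rowLen a else 0 := by
    intro i _
    have hmap : (List.range (sh.rowLen i)).map (fun j => T i j)
        = List.replicate (sh.rowLen i) i := by
      calc (List.range (sh.rowLen i)).map (fun j => T i j)
          = (List.range (sh.rowLen i)).map (fun _ => i) := List.map_congr_left (fun j hj =>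
            hconst i j (YoungDiagram.mem_iff_lt_rowLen.mpr (List.mem_range.mp hj)))
        _ = List.replicate (sh.rowLen i) i := by rw [List.map_const']; simp
    rw [hmap, List.count_replicate]
    by_cases h : i = a
    · subst h; simp
    · simp [show ¬ (i == a) from by simpa using h, h]
  rw [Finset.sum_congr rfl hterm]
  rw [Finset.sum_ite_eq' (Finset.range (sh.colLen 0)) a (fun _ => sh.rowLen a)]
  by_cases h : a ∈ Finset.range (sh.colLen 0)
  · rw [if_pos h]
  · rw [if_neg h]
    rw [Finset.mem_range] at h
    exact (rowLen_eq_zero_of_colLen_le (by omega)).symm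

/-! ### Structure theorems -/

lemma const_of_counts {sh : YoungDiagram} (T : SemistandardYoungTableau sh)
    (hc : ∀ j, (readingWord sh T).count j = sh.rowLen j) :
    ∀ i j, (i, j) ∈ sh → T i j = i := by
  intro i
  induction i using Nat.strong_induction_on with
  | _ i IH =>
    intro j hmem
    have hiL : i < sh.colLen 0 := YoungDiagram.mem_iff_lt_colLen.mp
      (sh.up_left_mem (le_refl i) (Nat.zero_le j) hmem)
    set F := fun m => (List.range (sh.rowLen m)).map fun j => T m j with hF
    have hcount : (readingWord sh T).count i = ∑ m ∈ Finset.range (sh.colLen 0), (F m).count i := by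
      rw [readingWord_eq, count_flattenRows]
    have hzero : ∀ m ∈ Finset.range (sh.colLen 0), m ≠ i → (F m).count i = 0 := by
      intro m _ hne
      rw [List.count_eq_zero]
      intro hmm
      simp only [hF, List.mem_map, List.mem_range] at hmm
      obtain ⟨jj, hjj, hTv⟩ := hmm
      have hmemm : (m, jj) ∈ sh := YoungDiagram.mem_iff_lt_rowLen.mpr hjj
      rcases lt_trichotomy m i with h | h | h
      · rw [IH m h jj hmemm] at hTv; omega
      · exact hne h
      · have := entry_ge_row T m jj hmemm; omega
    have hsum : (readingWord sh T).count i = (F i).count i := by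
      rw [hcount]
      exact Finset.sum_eq_single_of_mem i (Finset.mem_range.mpr hiL) (fun m hm hne => hzero m hm hne)
    have hlen : (F i).length = sh.rowLen i := by simp [hF]
    have hall : ∀ b ∈ F i, i = b := by
      rw [← List.count_eq_length, hsum.symm.trans (hc i), hlen]
    have hTmem : T i j ∈ F i := by
      simp only [hF, List.mem_map]
      exact ⟨j, by rw [List.mem_range, ← YoungDiagram.mem_iff_lt_rowLen]; exact hmem, rfl⟩
    exact (hall _ hTmem).symm

lemma const_of_lat {sh : YoungDiagram} (T : SemistandardYoungTableau sh)
    (hlat : ∀ i', gg i' (readingWord sh T) ≤ 0) :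
    ∀ i j, (i, j) ∈ sh → T i j = i := by
  intro i
  induction i using Nat.strong_induction_on with
  | _ i IH =>
    intro j hmem
    have hiL : i < sh.colLen 0 := YoungDiagram.mem_iff_lt_colLen.mp
      (sh.up_left_mem (le_refl i) (Nat.zero_le j) hmem)
    set F := fun m => (List.range (sh.rowLen m)).map fun j => T m j with hF
    have hr : 0 < sh.rowLen i := by
      have := YoungDiagram.mem_iff_lt_rowLen.mp hmem; omega
    have hmemr : (i, sh.rowLen i - 1) ∈ sh := YoungDiagram.mem_iff_lt_rowLen.mpr (by omega)
    set c := T i (sh.rowLen i - 1) with hcdef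
    have hci : i ≤ c := entry_ge_row T i _ hmemr
    have hceq : c = i := by
      by_contra hne
      have hic : i < c := by omega
      -- build a suffix  c :: B
      obtain ⟨A, hA⟩ := flattenRows_decomp (f := F) hiL
      have hFi : F i = ((List.range (sh.rowLen i - 1)).map fun j => T i j) ++ [c] := by
        have e : List.range (sh.rowLen i) = List.range (sh.rowLen i - 1) ++ [sh.rowLen i - 1] := by
          conv_lhs => rw [show sh.rowLen i = (sh.rowLen i - 1) + 1 from by omega]
          rw [List.range_succ]
        simp only [hF]
        rw [e, List.map_append]
        simp
        exact hcdef.symm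
      set B := flattenRows F i with hBdef
      have hsuf : (c :: B) <:+ readingWord sh T := by
        refine ⟨A ++ ((List.range (sh.rowLen i - 1)).map fun j => T i j), ?_⟩
        rw [readingWord_eq, hA, hFi]
        simp [List.append_assoc]
      have hBsmall : ∀ x ∈ B, x < i := by
        intro x hx
        obtain ⟨m, hm, hxm⟩ := mem_flattenRows hx
        simp only [hF, List.mem_map, List.mem_range] at hxm
        obtain ⟨jj, hjj, rfl⟩ := hxm
        rw [IH m hm jj (YoungDiagram.mem_iff_lt_rowLen.mpr hjj)]
        exact hm
      have hD := Dd_suffix_le (c - 1) hsuf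
      have hcB : B.count c = 0 := by
        rw [List.count_eq_zero]; intro h; have := hBsmall c h; omega
      have hc1B : B.count (c - 1) = 0 := by
        rw [List.count_eq_zero]; intro h; have := hBsmall (c - 1) h; omega
      have hDval : Dd (c - 1) (c :: B) = 1 := by
        simp only [Dd, List.count_cons, beq_iff_eq, show c - 1 + 1 = c from by omega,
          hcB, hc1B]
        have h1 : ¬ (c = c - 1) := by omega
        simp [h1]
      have := hlat (c - 1)
      omega
    have hjlt : j < sh.rowLen i := YoungDiagram.mem_iff_lt_rowLen.mp hmem
    have h1 : T i j ≤ c := T.row_weak_of_le (by omega) hmemr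
    have h2 : i ≤ T i j := entry_ge_row T i j hmem
    omega

/-! ### The Yamanouchi SSYT of a given shape -/

def yamSSYT (sh : YoungDiagram) : SemistandardYoungTableau sh where
  entry := fun i j => if (i, j) ∈ sh then i else 0
  row_weak' := by
    intro i j1 j2 hj hmem
    have h1 : (i, j1) ∈ sh := sh.up_left_mem (le_refl i) (le_of_lt hj) hmem
    rw [if_pos h1, if_pos hmem]
  col_strict' := by
    intro i1 i2 j hi hmem
    have h1 : (i1, j) ∈ sh := sh.up_left_mem (le_of_lt hi) (le_refl j) hmem
    rw [if_pos h1, if_pos hmem]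
    exact hi
  zeros' := by
    intro i j h
    rw [if_neg h]

lemma yamSSYT_entry {sh : YoungDiagram} {i j : ℕ} (h : (i, j) ∈ sh) :
    yamSSYT sh i j = i := if_pos h

lemma nat_eq_of_lt_iff {x y : ℕ} (h : ∀ j, j < x ↔ j < y) : x = y := by
  have h1 := h x
  have h2 := h y
  omega

lemma rowLen_ofRowLens' {lam : List ℕ} {hs : lam.SortedGE} (i : ℕ) :
    (YoungDiagram.ofRowLens lam hs).rowLen i = lam.getD i 0 := by
  apply nat_eq_of_lt_iff
  intro j
  rw [← YoungDiagram.mem_iff_lt_rowLen, YoungDiagram.mem_ofRowLens]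
  constructor
  · rintro ⟨h1, h2⟩
    rwa [List.getD_eq_getElem _ _ h1]
  · intro h
    by_cases h1 : i < lam.length
    · exact ⟨h1, by rwa [List.getD_eq_getElem _ _ h1] at h⟩
    · rw [List.getD_eq_default _ _ (by omega)] at h
      omega

lemma colLen_ofRowLens_le {lam : List ℕ} {hs : lam.SortedGE} :
    (YoungDiagram.ofRowLens lam hs).colLen 0 ≤ lam.length := by
  by_contra hc
  have : (lam.length, 0) ∈ YoungDiagram.ofRowLens lam hs :=
    YoungDiagram.mem_iff_lt_colLen.mpr (by omega)
  rw [YoungDiagram.mem_ofRowLens] at this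
  obtain ⟨h1, _⟩ := this
  omega

lemma isTabShape_yamWord {n : ℕ} {lam : List ℕ} (hs : lam.Pairwise (· ≥ ·))
    (hlen : lam.length ≤ n + 1) :
    IsTabShape n (YoungDiagram.ofRowLens lam hs.sortedGE) (yamWord lam) := by
  set sh := YoungDiagram.ofRowLens lam hs.sortedGE with hsh
  refine ⟨yamSSYT sh, ?_, ?_⟩
  · intro i j hmem
    rw [yamSSYT_entry hmem]
    have : i < sh.colLen 0 := YoungDiagram.mem_iff_lt_colLen.mp
      (sh.up_left_mem (le_refl i) (Nat.zero_le j) hmem)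
    have h2 : sh.colLen 0 ≤ lam.length := colLen_ofRowLens_le
    omega
  · refine (reading_eq_yam (fun i j h => yamSSYT_entry h) lam colLen_ofRowLens_le ?_).symm
    exact fun i => rowLen_ofRowLens' i

lemma isYamWord_yamWord {n : ℕ} {lam : List ℕ} (hs : lam.Pairwise (· ≥ ·))
    (hlen : lam.length ≤ n + 1) : IsYamWord n (yamWord lam) := by
  refine ⟨YoungDiagram.ofRowLens lam hs.sortedGE, isTabShape_yamWord hs hlen, ?_⟩
  intro j
  rw [count_yam, rowLen_ofRowLens']

lemma isTab_yamWord {n : ℕ} {lam : List ℕ} (hs : lam.Pairwise (· ≥ ·))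
    (hlen : lam.length ≤ n + 1) : IsTab n (yamWord lam) :=
  ⟨_, isTabShape_yamWord hs hlen⟩

/-! ### Bridges -/

lemma yam_decomp_of_const {n : ℕ} {sh : YoungDiagram} {T : SemistandardYoungTableau sh}
    (hT : ∀ i j, (i, j) ∈ sh → T i j ≤ n)
    (hconst : ∀ i j, (i, j) ∈ sh → T i j = i) :
    readingWord sh T = yamWord (weightList n (readingWord sh T))
      ∧ (weightList n (readingWord sh T)).Pairwise (· ≥ ·) := by
  have hcount : ∀ a, (readingWord sh T).count a = sh.rowLen a := count_reading_const hconst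
  have hsort : (weightList n (readingWord sh T)).Pairwise (· ≥ ·) := by
    rw [weightList]
    refine (List.pairwise_lt_range).map _ ?_
    intro i j hij
    rw [hcount, hcount]
    exact sh.rowLen_anti i j (le_of_lt hij)
  refine ⟨?_, hsort⟩
  refine reading_eq_yam hconst _ (by simpa using colLen_le_of_entries hT) ?_
  intro i
  by_cases h : i ≤ n
  · rw [weightList_getD_le _ h, hcount]
  · rw [weightList_getD_gt _ (by omega)]
    exact rowLen_eq_zero_of_colLen_le (le_trans (colLen_le_of_entries hT) (by omega))

/-- A Yamanouchi tableau word is the `yamWord` of its weight, and is a lattice word. -/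
lemma isYamWord_lat {n : ℕ} {y : Word} (h : IsYamWord n y) : ∀ i, gg i y ≤ 0 := by
  obtain ⟨sh, ⟨T, hT, rfl⟩, hcount⟩ := h
  have hconst : ∀ i j, (i, j) ∈ sh → T i j = i := const_of_counts T hcount
  obtain ⟨heq, hsort⟩ := yam_decomp_of_const hT hconst
  intro i
  rw [heq]
  exact lat_yam hsort i

/-- A lattice tableau word equals the `yamWord` of its weight. -/
lemma eq_yam_of_lat {n : ℕ} {sh : YoungDiagram} {w : Word} (hT : IsTabShape n sh w)
    (hlat : ∀ i, gg i w ≤ 0) : w = yamWord (weightList n w) := by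
  obtain ⟨T, hT', rfl⟩ := hT
  have hconst : ∀ i j, (i, j) ∈ sh → T i j = i := const_of_lat T hlat
  exact (yam_decomp_of_const hT' hconst).1

/-! ### Small helpers for the main theorem -/

lemma getD_replicate' {m x a : ℕ} :
    (List.replicate m x).getD a 0 = if a < m then x else 0 := by
  by_cases h : a < m
  · rw [List.getD_eq_getElem _ _ (by simpa using h)]; simp [h]
  · rw [List.getD_eq_default _ _ (by simpa using h)]; simp [h]

lemma sorted_replicate (m x : ℕ) : (List.replicate m x).Pairwise (· ≥ ·) := by
  induction m with
  | zero => simp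
  | succ j ih =>
    rw [List.replicate_succ, List.pairwise_cons]
    exact ⟨fun b hb => by rw [List.eq_of_mem_replicate hb], ih⟩

lemma gg_nonpos_high {n i : ℕ} {w : Word} (hle : ∀ a ∈ w, a ≤ n) (h : n ≤ i) :
    gg i w ≤ 0 := by
  induction w with
  | nil => simp
  | cons a w ih =>
    have hcz : (a :: w).count (i + 1) = 0 := by
      rw [List.count_eq_zero]
      intro hmem
      have := hle _ hmem
      omega
    have hDd : Dd i (a :: w) ≤ 0 := by
      simp only [Dd, hcz]
      omega
    rw [gg_cons]
    have := ih (fun x hx => hle x (by simp [hx]))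
    omega

/-- Equality of weight lists from equality of counts. -/
lemma weightList_congr {n : ℕ} {X Y : Word} (h : ∀ j, j ≤ n → X.count j = Y.count j) :
    weightList n X = weightList n Y := by
  unfold weightList
  apply List.map_congr_left
  intro j hj
  rw [List.mem_range] at hj
  exact h j (by omega)



/-- Let `t` be a semistandard tableau of rectangular weight
`(k^{n+1})`. There is a unique tableau `u` of minimal weight such that the
plactic product `t ⋅ u` is a Yamanouchi tableau; moreover every such `u` is
itself Yamanouchi, and `t u ≡ u y ≡ y u` where `y` is the Yamanouchi tableau
of weight `(k^{n+1})`. -/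
theorem minimal_yamanouchi_complement
    (n k : ℕ) (hn : 1 ≤ n) (sh : YoungDiagram) (w : Word)
    (hw : IsTabOf n sh (List.replicate (n + 1) k) w) :
    (∃! u : Word, MinimalYamComplement n w u)
    ∧ ∀ u : Word, MinimalYamComplement n w u →
        IsYamWord n u
        ∧ Plactic (w ++ u) (u ++ yamWord (List.replicate (n + 1) k))
        ∧ Plactic (u ++ yamWord (List.replicate (n + 1) k))
            (yamWord (List.replicate (n + 1) k) ++ u) := by
  classical
  obtain ⟨hts, hcw⟩ := hw
  have hlw : ∀ a ∈ w, a ≤ n := letters_le_of_isTabShape hts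
  have hcountw : ∀ a, w.count a = if a < n + 1 then k else 0 := by
    intro a; rw [hcw a, getD_replicate']
  -- the minimal weight
  set mfun : ℕ → ℕ := fun i => (gg i w).toNat with hmfun
  set mu : List ℕ := (List.range (n + 1)).map (fun j => ∑ i ∈ Finset.Ico j n, mfun i)
    with hmu
  have hmulen : mu.length = n + 1 := by simp [hmu]
  have hmugetD : ∀ j, j ≤ n → mu.getD j 0 = ∑ i ∈ Finset.Ico j n, mfun i := by
    intro j hj
    rw [hmu, List.getD_eq_getElem _ _ (by simpa using by omega)]
    simp
  have hmugetD' : ∀ j, n < j → mu.getD j 0 = 0 := by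
    intro j hj
    exact List.getD_eq_default _ _ (by simp [hmu]; omega)
  have hmusorted : mu.Pairwise (· ≥ ·) := by
    rw [hmu]
    refine (List.pairwise_lt_range).map _ ?_
    intro i j hij
    exact Finset.sum_le_sum_of_subset (Finset.Ico_subset_Ico (le_of_lt hij) (le_refl n))
  have hmustep : ∀ j, j < n → mu.getD j 0 = mfun j + mu.getD (j + 1) 0 := by
    intro j hj
    rw [hmugetD j (by omega), hmugetD (j + 1) (by omega)]
    exact Finset.sum_eq_sum_Ico_succ_bot hj _
  have hmun : mu.getD n 0 = 0 := by rw [hmugetD n (le_refl n)]; simp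
  set ustar : Word := yamWord mu with hustardef
  have hcu : ∀ a, ustar.count a = mu.getD a 0 := fun a => count_yam mu a
  have hlatu : ∀ i, gg i ustar ≤ 0 := lat_yam hmusorted
  have hlu : ∀ a ∈ ustar, a ≤ n := by
    intro a ha
    have := mem_yam_lt ha
    omega
  have hggw_nonneg : ∀ i, (0 : ℤ) ≤ gg i w := fun i => gg_nonneg i w
  have hmtoNat : ∀ i, (mfun i : ℤ) = gg i w := fun i => Int.toNat_of_nonneg (hggw_nonneg i)
  have hDdu : ∀ i, Dd i ustar ≤ 0 := by
    intro i
    simp only [Dd, hcu]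
    have h1 : mu.getD (i + 1) 0 ≤ mu.getD i 0 :=
      getD_anti hmusorted (show i ≤ i + 1 by omega)
    omega
  have hDdu_lt : ∀ i, i < n → Dd i ustar = -(mfun i : ℤ) := by
    intro i hi
    simp only [Dd, hcu]
    rw [hmustep i hi]
    push_cast
    ring
  have hkey : ∀ i, gg i w + Dd i ustar ≤ 0 := by
    intro i
    by_cases hi : i < n
    · rw [hDdu_lt i hi, ← hmtoNat i]; omega
    · have h1 := gg_nonpos_high hlw (show n ≤ i by omega)
      have h2 := hDdu i
      omega
  have hlatwu : ∀ i, gg i (w ++ ustar) ≤ 0 := by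
    intro i
    rw [gg_append]
    have := hlatu i
    have := hkey i
    omega
  have hlwu : ∀ a ∈ w ++ ustar, a ≤ n := by
    intro a ha
    rcases List.mem_append.mp ha with h | h
    · exact hlw a h
    · exact hlu a h
  -- `ustar` is a valid complement
  have hexY : ∃ y, IsYamWord n y ∧ Plactic (w ++ ustar) y := by
    refine ⟨yamWord (weightList n (w ++ ustar)), ?_, master n _ hlwu hlatwu⟩
    exact isYamWord_yamWord (weightList_sorted hlatwu) (by simp)
  have htabu : IsTab n ustar := isTab_yamWord hmusorted (by omega)
  -- minimality bound for any valid complement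
  have hmin : ∀ v : Word, IsTab n v → (∃ y, IsYamWord n y ∧ Plactic (w ++ v) y) →
      (∀ i, gg i v ≤ 0) ∧ ∀ j, mu.getD j 0 ≤ v.count j := by
    intro v hv hy
    obtain ⟨shv, htsv⟩ := hv
    obtain ⟨y, hyam, hpl⟩ := hy
    have hlaty := isYamWord_lat hyam
    have hlatwv : ∀ i, gg i (w ++ v) ≤ 0 := fun i => by
      rw [hpl.gg_eq i]; exact hlaty i
    have hlatv : ∀ i, gg i v ≤ 0 := fun i => by
      have := hlatwv i; rw [gg_append] at this; omega
    have hkeyv : ∀ i, gg i w + Dd i v ≤ 0 := fun i => by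
      have := hlatwv i; rw [gg_append] at this; omega
    refine ⟨hlatv, ?_⟩
    have aux : ∀ d, d ≤ n → (∑ i ∈ Finset.Ico (n - d) n, mfun i) ≤ v.count (n - d) := by
      intro d
      induction d with
      | zero => intro _; simp
      | succ e ih =>
        intro hd
        have hlt : n - (e + 1) < n := by omega
        rw [Finset.sum_eq_sum_Ico_succ_bot hlt]
        have he : n - (e + 1) + 1 = n - e := by omega
        rw [he]
        have h1 := ih (by omega)
        have h2 := hkeyv (n - (e + 1))
        simp only [Dd] at h2
        rw [show n - (e + 1) + 1 = n - e from he] at h2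
        have h3 := hmtoNat (n - (e + 1))
        omega
    intro j
    by_cases hj : j ≤ n
    · have := aux (n - j) (by omega)
      rw [show n - (n - j) = j from by omega] at this
      rw [hmugetD j hj]
      exact this
    · rw [hmugetD' j (by omega)]
      exact Nat.zero_le _
  have hustar : MinimalYamComplement n w ustar := by
    refine ⟨htabu, hexY, ?_⟩
    intro v hv hy j
    rw [hcu j]
    exact (hmin v hv hy).2 j
  -- uniqueness
  have huniq : ∀ u : Word, MinimalYamComplement n w u → u = ustar := by
    intro u hu
    obtain ⟨hutab, huy, humin⟩ := hu
    have h1 := hmin u hutab huy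
    have h2 : ∀ j, u.count j ≤ ustar.count j := humin ustar htabu hexY
    have hcnt : ∀ j, u.count j = mu.getD j 0 := by
      intro j
      have := h2 j
      rw [hcu j] at this
      exact le_antisymm this (h1.2 j)
    obtain ⟨shu, htsu⟩ := hutab
    have hequ : u = yamWord (weightList n u) := eq_yam_of_lat htsu h1.1
    have hwl : weightList n u = mu := by
      apply List.ext_getElem (by simp [hmulen])
      intro j hj1 hj2
      have hjn : j ≤ n := by simp at hj1; omega
      have e1 : (weightList n u)[j] = u.count j := by simp [weightList]
      rw [e1, hcnt j, List.getD_eq_getElem _ _ hj2]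
    rw [hequ, hwl]
  refine ⟨⟨ustar, hustar, huniq⟩, ?_⟩
  intro u hu
  have hueq : u = ustar := huniq u hu
  subst hueq
  set yR : Word := yamWord (List.replicate (n + 1) k) with hyR
  have hrepsorted : (List.replicate (n + 1) k).Pairwise (· ≥ ·) := sorted_replicate _ _
  have hlatyR : ∀ i, gg i yR ≤ 0 := lat_yam hrepsorted
  have hlyR : ∀ a ∈ yR, a ≤ n := by
    intro a ha
    have := mem_yam_lt ha
    simp at this
    omega
  have hcyR : ∀ a, yR.count a = if a < n + 1 then k else 0 := by
    intro a
    rw [hyR, count_yam, getD_replicate']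
  -- the three words have the same weight and are all lattice words
  have hDdyR : ∀ i, Dd i yR ≤ 0 := by
    intro i
    simp only [Dd, hcyR]
    split_ifs <;> omega
  have hlat2 : ∀ i, gg i (ustar ++ yR) ≤ 0 := by
    intro i
    rw [gg_append]
    have := hlatyR i
    have h2 := hDdyR i
    have h3 := hlatu i
    omega
  have hlat3 : ∀ i, gg i (yR ++ ustar) ≤ 0 := by
    intro i
    rw [gg_append]
    have := hlatu i
    have h2 := hDdu i
    have h3 := hlatyR i
    omega
  have hl2 : ∀ a ∈ ustar ++ yR, a ≤ n := by
    intro a ha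
    rcases List.mem_append.mp ha with h | h
    · exact hlu a h
    · exact hlyR a h
  have hl3 : ∀ a ∈ yR ++ ustar, a ≤ n := by
    intro a ha
    rcases List.mem_append.mp ha with h | h
    · exact hlyR a h
    · exact hlu a h
  have hwt12 : weightList n (w ++ ustar) = weightList n (ustar ++ yR) := by
    apply weightList_congr
    intro j hj
    rw [List.count_append, List.count_append, hcountw j, hcyR j]
    simp [show j < n + 1 from by omega]
    omega
  have hwt23 : weightList n (ustar ++ yR) = weightList n (yR ++ ustar) := by
    apply weightList_congr
    intro j hj
    rw [List.count_append, List.count_append]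
    omega
  have hp1 := master n (w ++ ustar) hlwu hlatwu
  have hp2 := master n (ustar ++ yR) hl2 hlat2
  have hp3 := master n (yR ++ ustar) hl3 hlat3
  rw [hwt12] at hp1
  rw [← hwt23] at hp3
  refine ⟨isYamWord_yamWord hmusorted (by omega), hp1.trans hp2.symm, ?_⟩
  exact hp2.trans hp3.symm

end PlacticCrystal
end
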